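/- arXiv:1802.09805 — 6 statements merged into one kernel-verified Lean document; each statement's English description precedes it below -/
import Mathlib

section
/- Let (W,S) be a Coxeter system with Demazure product ∘. For every involution z in W, the set A_hecke(z) = { w ∈ W : w⁻¹ ∘ w = z } is nonempty. -/
/-!
If `z = w⁻¹ ∘ w` and `s` is simple, then `s ∘ z ∘ s = (w ∘ s)⁻¹ ∘ (w ∘ s)`, because
`s ∘ w⁻¹ = (w ∘ s)⁻¹`; so it suffices to reach every involution from `1` by such steps. An
involution `z ≠ 1` has a right descent `s`, which is also a left descent, and the exchange
condition gives either `sz = zs`, so that `z = s ∘ zs ∘ s` with `zs` a shorter involution, or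
`ℓ(szs) = ℓ(z) - 2`, so that `z = s ∘ szs ∘ s`. Induction on the length concludes.

The exchange condition is obtained from Tits' sign representation of `W` on `(W → ℤˣ) ⋊ W`:
its first component at `π ω` is the indicator of the reflections occurring an odd number of
times in the left inversion sequence of `ω`, hence does not depend on the word `ω`.
-/

theorem mulAutArrow_toConjAct_mulSingle {G M : Type*} [Group G] [DecidableEq G] [Monoid M]
    (g v : G) (a : M) :
    mulAutArrow (ConjAct.toConjAct g) (Pi.mulSingle v a) = Pi.mulSingle (g * v * g⁻¹) a := by
  ext t
  change (Pi.mulSingle v a : G → M) ((ConjAct.toConjAct g)⁻¹ • t) = _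
  rw [← map_inv, ConjAct.toConjAct_smul, Pi.mulSingle_apply, Pi.mulSingle_apply, inv_inv]
  congr 1
  exact propext ⟨by rintro rfl; group, by rintro rfl; group⟩

theorem List.prod_map_mulSingle_apply_of_notMem {ι M : Type*} [DecidableEq ι] [Monoid M]
    {L : List ι} {t : ι} (ht : t ∉ L) (a : M) :
    (L.map fun v => Pi.mulSingle v a).prod t = 1 := by
  rw [Pi.list_prod_apply, List.map_map]
  refine List.prod_eq_one ?_
  simp only [List.mem_map, Function.comp_apply, forall_exists_index, and_imp,
    forall_apply_eq_imp_iff₂]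
  exact fun v hv => Pi.mulSingle_eq_of_ne (M := fun _ => M) (ne_of_mem_of_not_mem hv ht).symm a

theorem conj_pow_eq_pow_two_mul_of_conj_eq_inv {G : Type*} [Group G] {r x : G}
    (h : r * x * r⁻¹ = x⁻¹) (k : ℕ) : x ^ k * r * (x ^ k)⁻¹ = x ^ (2 * k) * r := by
  have : r * (x ^ k)⁻¹ * r⁻¹ = x ^ k := by
    rw [← inv_pow, ← conj_pow, ← conj_inv, h, inv_inv]
  calc x ^ k * r * (x ^ k)⁻¹ = x ^ k * (r * (x ^ k)⁻¹ * r⁻¹) * r := by group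
    _ = x ^ (2 * k) * r := by rw [this, ← pow_add, two_mul]

namespace CoxeterSystem

open List

variable {B W : Type*} [Group W] {M : CoxeterMatrix B} (cs : CoxeterSystem M W)

local prefix:100 "s " => cs.simple
local prefix:100 "π " => cs.wordProd
local prefix:100 "ℓ " => cs.length
local prefix:100 "lis " => cs.leftInvSeq

section SignRepresentation

variable [DecidableEq W]

local notation "R" => (W → ℤˣ) ⋊[mulAutArrow] ConjAct W

def signGen (i : B) : R := ⟨Pi.mulSingle (s i) (-1), ConjAct.toConjAct (s i)⟩

theorem signGen_mul_signGen_pow (i j : B) (k : ℕ) :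
    (cs.signGen i * cs.signGen j) ^ k =
      ⟨∏ l ∈ Finset.range (2 * k), Pi.mulSingle ((s i * s j) ^ l * s i) (-1),
        ConjAct.toConjAct ((s i * s j) ^ k)⟩ := by
  set x := s i * s j
  have hconj : s i * x * (s i)⁻¹ = x⁻¹ := by
    simp only [x, mul_inv_rev, inv_simple, simple_mul_simple_cancel_left]
  have hgen : cs.signGen i * cs.signGen j =
      ⟨Pi.mulSingle (s i) (-1) * Pi.mulSingle (x * s i) (-1), ConjAct.toConjAct x⟩ := by
    rw [signGen, signGen, SemidirectProduct.mul_def, mulAutArrow_toConjAct_mulSingle, inv_simple,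
      map_mul]
  induction k with
  | zero => simp only [pow_zero, mul_zero, Finset.prod_range_zero, map_one]; rfl
  | succ k ih =>
    have hstep : mulAutArrow (ConjAct.toConjAct (x ^ k))
        ((Pi.mulSingle (s i) (-1) : W → ℤˣ) * Pi.mulSingle (x * s i) (-1)) =
        Pi.mulSingle (x ^ (2 * k) * s i) (-1) * Pi.mulSingle (x ^ (2 * k + 1) * s i) (-1) := by
      rw [map_mul, mulAutArrow_toConjAct_mulSingle, mulAutArrow_toConjAct_mulSingle,
        conj_pow_eq_pow_two_mul_of_conj_eq_inv hconj]
      congr 2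
      calc x ^ k * (x * s i) * (x ^ k)⁻¹ = x * (x ^ k * s i * (x ^ k)⁻¹) := by group
        _ = x ^ (2 * k + 1) * s i := by
          rw [conj_pow_eq_pow_two_mul_of_conj_eq_inv hconj, ← mul_assoc, ← pow_succ']
    rw [pow_succ, ih, hgen, SemidirectProduct.mul_def, hstep, ← map_mul, ← pow_succ, mul_add_one,
      Finset.prod_range_succ, Finset.prod_range_succ, mul_assoc]

theorem isLiftable_signGen : M.IsLiftable cs.signGen := by
  intro i j
  have hx : (s i * s j) ^ M i j = 1 := cs.simple_mul_simple_pow i j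
  rw [signGen_mul_signGen_pow, two_mul, Finset.prod_range_add]
  have hsq : ∀ f : W → ℤˣ, f ^ 2 = 1 := fun f => funext fun t => Int.units_sq (f t)
  simp only [pow_add, hx, one_mul, ← sq]
  rw [hsq, map_one]
  rfl

def signRep : W →* R := cs.lift ⟨cs.signGen, cs.isLiftable_signGen⟩

theorem signRep_wordProd_left (ω : List B) :
    (cs.signRep (π ω)).left = ((lis ω).map fun t => Pi.mulSingle t (-1)).prod := by
  induction ω with
  | nil => rw [wordProd_nil, map_one]; rfl
  | cons i ω ih =>
    rw [wordProd_cons, map_mul, signRep, lift_apply_simple, ← signRep, SemidirectProduct.mul_left,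
      ih, leftInvSeq, map_cons, prod_cons, map_map, ← MulEquiv.coe_toMonoidHom, map_list_prod,
      map_map]
    congr 2
    exact map_congr_left fun t _ => mulAutArrow_toConjAct_mulSingle _ _ _

end SignRepresentation

theorem mul_simple_mul_inv_mem_leftInvSeq {ω : List B} {i : B}
    (h : cs.IsRightDescent (π ω) i) : π ω * s i * (π ω)⁻¹ ∈ lis ω := by
  classical
  set t := π ω * s i * (π ω)⁻¹ with ht
  obtain ⟨ω', hω', hω'i⟩ := cs.exists_isReduced (π ω * s i)
  have hnotMem : t ∉ lis ω' := fun hmem => by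
    have hlt := (cs.isLeftInversion_of_mem_leftInvSeq hω' hmem).2
    rw [← hω'i, ht, mul_assoc, inv_mul_cancel_left, simple_mul_simple_cancel_right] at hlt
    exact lt_asymm h hlt
  have hconcat : π (ω'.concat i) = π ω := by
    rw [wordProd_concat, ← hω'i, simple_mul_simple_cancel_right]
  have hlast : π ω' * s i * (π ω')⁻¹ = t := by
    rw [← hω'i, simple_mul_simple_cancel_right, mul_inv_rev, inv_simple, ← mul_assoc]
  have hval : (cs.signRep (π ω)).left t = -1 := by
    rw [← hconcat, signRep_wordProd_left, leftInvSeq_concat, hlast, concat_eq_append, map_append,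
      prod_append, Pi.mul_apply, List.prod_map_mulSingle_apply_of_notMem hnotMem, one_mul]
    simp
  by_contra hc
  rw [signRep_wordProd_left, List.prod_map_mulSingle_apply_of_notMem hc] at hval
  exact absurd hval (by decide)

theorem exists_eraseIdx_of_isRightDescent {ω : List B} {i : B}
    (h : cs.IsRightDescent (π ω) i) : ∃ j < ω.length, π ω * s i = π (ω.eraseIdx j) := by
  obtain ⟨j, hj, ht⟩ := getElem_of_mem (cs.mul_simple_mul_inv_mem_leftInvSeq h)
  refine ⟨j, by simpa using hj, ?_⟩
  rw [← getD_leftInvSeq_mul_wordProd, getD_eq_getElem _ _ hj, ht]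
  group

theorem simple_mul_eq_mul_simple_or_length_add_two_le {w : W} {i : B}
    (hL : cs.IsLeftDescent w i) (hR : cs.IsRightDescent w i) :
    s i * w = w * s i ∨ ℓ (s i * w * s i) + 2 ≤ ℓ w := by
  obtain ⟨ω, hω, hsw⟩ := cs.exists_isReduced (s i * w)
  have hw : π (i :: ω) = w := by rw [wordProd_cons, ← hsw, simple_mul_simple_cancel_left]
  rw [← hw] at hR
  obtain ⟨j, hj, hwj⟩ := cs.exists_eraseIdx_of_isRightDescent hR
  rw [hw] at hwj
  cases j with
  | zero =>
    rw [eraseIdx_cons_zero, ← hsw] at hwj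
    exact Or.inl hwj.symm
  | succ j =>
    rw [eraseIdx_cons_succ, wordProd_cons] at hwj
    have hswj : s i * w * s i = π (ω.eraseIdx j) := by
      rw [mul_assoc, hwj, simple_mul_simple_cancel_left]
    rw [length_cons, Nat.add_lt_add_iff_right] at hj
    have hle := cs.length_wordProd_le (ω.eraseIdx j)
    rw [length_eraseIdx_of_lt hj, ← hswj] at hle
    have hlen : ℓ (s i * w) = ω.length := hsw ▸ hω.eq
    have := cs.isLeftDescent_iff.mp hL
    exact Or.inr (by omega)

structure IsDemazureProduct (o : W → W → W) : Prop where
  assoc : ∀ u v w, o (o u v) w = o u (o v w)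
  simple_self : ∀ i, o (s i) (s i) = s i
  of_length_add : ∀ u v, ℓ u + ℓ v = ℓ (u * v) → o u v = u * v

namespace IsDemazureProduct

variable {cs} {o : W → W → W} (ho : cs.IsDemazureProduct o)
include ho

theorem mul_simple_of_not_isRightDescent {u : W} {i : B} (h : ¬cs.IsRightDescent u i) :
    o u (s i) = u * s i :=
  ho.of_length_add _ _ (by rw [length_simple, cs.not_isRightDescent_iff.mp h])

theorem simple_mul_of_not_isLeftDescent {u : W} {i : B} (h : ¬cs.IsLeftDescent u i) :
    o (s i) u = s i * u :=
  ho.of_length_add _ _ (by rw [length_simple, cs.not_isLeftDescent_iff.mp h, add_comm])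

theorem mul_simple_of_isRightDescent {u : W} {i : B} (h : cs.IsRightDescent u i) :
    o u (s i) = u := by
  have hu : o (u * s i) (s i) = u := by
    rw [ho.mul_simple_of_not_isRightDescent (cs.isRightDescent_iff_not_isRightDescent_mul.mp h),
      simple_mul_simple_cancel_right]
  calc o u (s i) = o (o (u * s i) (s i)) (s i) := by rw [hu]
    _ = o (u * s i) (s i) := by rw [ho.assoc, ho.simple_self]
    _ = u := hu

theorem simple_mul_of_isLeftDescent {u : W} {i : B} (h : cs.IsLeftDescent u i) :
    o (s i) u = u := by
  have hu : o (s i) (s i * u) = u := by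
    rw [ho.simple_mul_of_not_isLeftDescent (cs.isLeftDescent_iff_not_isLeftDescent_mul.mp h),
      simple_mul_simple_cancel_left]
  calc o (s i) u = o (s i) (o (s i) (s i * u)) := by rw [hu]
    _ = o (s i) (s i * u) := by rw [← ho.assoc, ho.simple_self]
    _ = u := hu

theorem simple_mul_inv (u : W) (i : B) : o (s i) u⁻¹ = (o u (s i))⁻¹ := by
  by_cases h : cs.IsRightDescent u i
  · rw [ho.simple_mul_of_isLeftDescent (cs.isLeftDescent_inv_iff.mpr h),
      ho.mul_simple_of_isRightDescent h]
  · rw [ho.simple_mul_of_not_isLeftDescent (mt cs.isLeftDescent_inv_iff.mp h),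
      ho.mul_simple_of_not_isRightDescent h, mul_inv_rev, inv_simple]

theorem simple_mul_inv_mul_self_mul_simple (w : W) (i : B) :
    o (s i) (o (o w⁻¹ w) (s i)) = o (o w (s i))⁻¹ (o w (s i)) := by
  rw [ho.assoc w⁻¹ w, ← ho.assoc (s i), ho.simple_mul_inv]

theorem exists_simple_conj_eq_of_mul_self_eq_one {z : W} (hz : z * z = 1) (hz1 : z ≠ 1) :
    ∃ y i, y * y = 1 ∧ ℓ y < ℓ z ∧ o (s i) (o y (s i)) = z := by
  obtain ⟨i, hR⟩ := cs.exists_rightDescent_of_ne_one hz1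
  have hL : cs.IsLeftDescent z i := inv_eq_of_mul_eq_one_right hz ▸ cs.isLeftDescent_inv_iff.mpr hR
  rcases cs.simple_mul_eq_mul_simple_or_length_add_two_le hL hR with hcomm | hlen
  · refine ⟨z * s i, i, ?_, hR, ?_⟩
    · rw [mul_assoc z, ← mul_assoc (s i), hcomm, mul_assoc z, simple_mul_simple_self, mul_one, hz]
    · rw [ho.mul_simple_of_not_isRightDescent (cs.isRightDescent_iff_not_isRightDescent_mul.mp hR),
        simple_mul_simple_cancel_right, ho.simple_mul_of_isLeftDescent hL]
  · have hnot : ¬cs.IsRightDescent (s i * z * s i) i := by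
      have := cs.isLeftDescent_iff.mp hL
      rw [IsRightDescent, simple_mul_simple_cancel_right]
      omega
    refine ⟨s i * z * s i, i, ?_, by omega, ?_⟩
    · calc s i * z * s i * (s i * z * s i) = s i * (z * (s i * s i) * z) * s i := by group
        _ = 1 := by rw [simple_mul_simple_self, mul_one, hz, mul_one, simple_mul_simple_self]
    · rw [ho.mul_simple_of_not_isRightDescent hnot, simple_mul_simple_cancel_right,
        ho.simple_mul_of_not_isLeftDescent (cs.isLeftDescent_iff_not_isLeftDescent_mul.mp hL),
        simple_mul_simple_cancel_left]

theorem exists_inv_self_eq_of_mul_self_eq_one {z : W} (hz : z * z = 1) : ∃ w, o w⁻¹ w = z := by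
  induction hn : ℓ z using Nat.strong_induction_on generalizing z with
  | _ n ih =>
    obtain rfl | hz1 := eq_or_ne z 1
    · exact ⟨1, by rw [inv_one, ho.of_length_add 1 1 (by simp), mul_one]⟩
    obtain ⟨y, i, hy, hyz, rfl⟩ := ho.exists_simple_conj_eq_of_mul_self_eq_one hz hz1
    obtain ⟨w, rfl⟩ := ih _ (hn ▸ hyz) hy rfl
    exact ⟨o w (s i), (ho.simple_mul_inv_mul_self_mul_simple w i).symm⟩

end IsDemazureProduct

end CoxeterSystem

/-- Let `(W, S)` be a Coxeter system and let `o` be its Demazure product,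
i.e. the (unique) associative product with `s ∘ s = s` for all simple reflections `s`
and `u ∘ v = u * v` whenever `ℓ(u) + ℓ(v) = ℓ(u * v)`.  Then for every involution
`z ∈ W`, the set `A_hecke(z) = { w : w⁻¹ ∘ w = z }` is nonempty. -/
theorem stmt_1 {B W : Type*} [Group W] {M : CoxeterMatrix B} (cs : CoxeterSystem M W)
    (o : W → W → W)
    (hassoc : ∀ u v w : W, o (o u v) w = o u (o v w))
    (hsimple : ∀ i : B, o (cs.simple i) (cs.simple i) = cs.simple i)
    (hadd : ∀ u v : W, cs.length u + cs.length v = cs.length (u * v) → o u v = u * v)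
    (z : W) (hz : z * z = 1) :
    {w : W | o w⁻¹ w = z}.Nonempty :=
  (CoxeterSystem.IsDemazureProduct.mk hassoc hsimple hadd).exists_inv_self_eq_of_mul_self_eq_one hz
end

section
/- Let z be an involution in a Coxeter group W, let A(z) be the set of minimal length elements w with w⁻¹ ∘ w = z (where ∘ is the Demazure product), and let w ∈ A(z). If v ∈ W satisfies v ≤_R w in right weak order, then v ∈ A(y) for some involution y ∈ W. -/
/-- Let `z` be an involution in a Coxeter group `W`, let `A(z)` be the set
of minimal-length elements `w` with `w⁻¹ ∘ w = z` (with `∘` the Demazure product), and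
let `w ∈ A(z)`.  If `v ≤_R w` in right weak order (i.e. `ℓ(w) = ℓ(v) + ℓ(v⁻¹ * w)`),
then `v ∈ A(y)` for some involution `y ∈ W`. -/
theorem stmt_2 {B W : Type*} [Group W] {M : CoxeterMatrix B} (cs : CoxeterSystem M W)
    (o : W → W → W)
    (hassoc : ∀ u v w : W, o (o u v) w = o u (o v w))
    (hsimple : ∀ i : B, o (cs.simple i) (cs.simple i) = cs.simple i)
    (hadd : ∀ u v : W, cs.length u + cs.length v = cs.length (u * v) → o u v = u * v)
    (z w : W) (hz : z * z = 1)
    (hwz : o w⁻¹ w = z) (hwmin : ∀ u : W, o u⁻¹ u = z → cs.length w ≤ cs.length u)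
    (v : W) (hv : cs.length w = cs.length v + cs.length (v⁻¹ * w)) :
    ∃ y : W, y * y = 1 ∧ o v⁻¹ v = y ∧
      ∀ u : W, o u⁻¹ u = y → cs.length v ≤ cs.length u := by
  -- basic facts about `o` with a simple reflection on the right
  have hsimpR : ∀ (x : W) (i : B),
      (o x (cs.simple i) = x * cs.simple i ∧
        cs.length (x * cs.simple i) = cs.length x + 1) ∨
      (o x (cs.simple i) = x ∧ cs.length (x * cs.simple i) + 1 = cs.length x) := by
    intro x i
    rcases cs.length_mul_simple x i with h | h
    · left
      refine ⟨hadd x (cs.simple i) ?_, h⟩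
      rw [h, cs.length_simple]
    · right
      refine ⟨?_, h⟩
      set x' := x * cs.simple i with hx'
      have hxx : x' * cs.simple i = x := by
        rw [hx']; simp [mul_assoc, cs.simple_sq]
      have h1 : o x' (cs.simple i) = x := by
        rw [← hxx]
        exact hadd x' (cs.simple i) (by rw [hxx, cs.length_simple]; exact h)
      calc o x (cs.simple i) = o (o x' (cs.simple i)) (cs.simple i) := by rw [h1]
        _ = o x' (o (cs.simple i) (cs.simple i)) := hassoc _ _ _
        _ = o x' (cs.simple i) := by rw [hsimple]
        _ = x := h1
  -- inverse of `o x s`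
  have hinvS : ∀ (x : W) (i : B),
      (o x (cs.simple i))⁻¹ = o (cs.simple i) x⁻¹ := by
    intro x i
    rcases hsimpR x i with ⟨h1, h2⟩ | ⟨h1, h2⟩
    · rw [h1, mul_inv_rev, cs.inv_simple]
      refine (hadd (cs.simple i) x⁻¹ ?_).symm
      rw [cs.length_simple, cs.length_inv]
      have : cs.length ((cs.simple i) * x⁻¹) = cs.length (x * cs.simple i) := by
        rw [← cs.length_inv ((cs.simple i) * x⁻¹)]
        congr 1
        simp [mul_inv_rev, cs.inv_simple]
      omega
    · rw [h1]
      set x' := x * cs.simple i with hx'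
      have hxinv : cs.simple i * x'⁻¹ = x⁻¹ := by
        rw [hx']; simp [mul_inv_rev, cs.inv_simple, ← mul_assoc, cs.simple_sq]
      have h3 : o (cs.simple i) x'⁻¹ = x⁻¹ := by
        rw [← hxinv]
        refine hadd (cs.simple i) x'⁻¹ ?_
        rw [hxinv, cs.length_simple, cs.length_inv, cs.length_inv]
        omega
      have h4 : o (cs.simple i) x⁻¹ = x⁻¹ := by
        rw [← h3, ← hassoc, hsimple]
      exact h4.symm
  have hone : ∀ x : W, o x 1 = x := fun x => by
    have := hadd x 1 (by simp); simpa using this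
  -- main lemma: inverse formula and subadditivity, by induction on length of right factor
  have key : ∀ n : ℕ, ∀ b : W, cs.length b = n → ∀ a : W,
      (o a b)⁻¹ = o b⁻¹ a⁻¹ ∧ cs.length (o a b) ≤ cs.length a + cs.length b := by
    intro n
    induction n using Nat.strong_induction_on with
    | _ n ih =>
      intro b hb a
      rcases eq_or_ne b 1 with rfl | hb1
      · constructor
        · rw [hone, inv_one]
          rw [hadd 1 a⁻¹ (by simp)]
          simp
        · simp [hone]
      · obtain ⟨i, hi⟩ := cs.exists_rightDescent_of_ne_one hb1
        rw [cs.isRightDescent_iff] at hi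
        set b' := b * cs.simple i with hb'
        have hbb : b' * cs.simple i = b := by
          rw [hb']; simp [mul_assoc, cs.simple_sq]
        have hlb' : cs.length b' + 1 = cs.length b := hi
        have hob : o b' (cs.simple i) = b := by
          rw [← hbb]
          exact hadd b' (cs.simple i) (by rw [hbb, cs.length_simple]; omega)
        have hsplit : o a b = o (o a b') (cs.simple i) := by
          rw [hassoc, hob]
        obtain ⟨ih1, ih2⟩ := ih (cs.length b') (by omega) b' rfl a
        constructor
        · have hbinv : cs.simple i * b'⁻¹ = b⁻¹ := by
            rw [← hbb]; simp [mul_inv_rev, cs.inv_simple]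
          have hobinv : o (cs.simple i) b'⁻¹ = b⁻¹ := by
            rw [← hbinv]
            refine hadd (cs.simple i) b'⁻¹ ?_
            rw [hbinv, cs.length_simple, cs.length_inv, cs.length_inv]
            omega
          calc (o a b)⁻¹ = (o (o a b') (cs.simple i))⁻¹ := by rw [hsplit]
            _ = o (cs.simple i) (o a b')⁻¹ := hinvS _ i
            _ = o (cs.simple i) (o b'⁻¹ a⁻¹) := by rw [ih1]
            _ = o (o (cs.simple i) b'⁻¹) a⁻¹ := (hassoc _ _ _).symm
            _ = o b⁻¹ a⁻¹ := by rw [hobinv]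
        · rw [hsplit]
          have : cs.length (o (o a b') (cs.simple i)) ≤ cs.length (o a b') + 1 := by
            rcases hsimpR (o a b') i with ⟨h1, h2⟩ | ⟨h1, h2⟩ <;> rw [h1] <;> omega
          omega
  have keyinv : ∀ a b : W, (o a b)⁻¹ = o b⁻¹ a⁻¹ := fun a b =>
    (key (cs.length b) b rfl a).1
  have keylen : ∀ a b : W, cs.length (o a b) ≤ cs.length a + cs.length b := fun a b =>
    (key (cs.length b) b rfl a).2
  -- now the actual statement
  refine ⟨o v⁻¹ v, ?_, rfl, ?_⟩
  · have hy : (o v⁻¹ v)⁻¹ = o v⁻¹ v := by rw [keyinv, inv_inv]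
    calc o v⁻¹ v * o v⁻¹ v = o v⁻¹ v * (o v⁻¹ v)⁻¹ := by rw [hy]
      _ = 1 := mul_inv_cancel _
  · intro u hu
    by_contra hlt
    push_neg at hlt
    set a := v⁻¹ * w with ha
    have hva : v * a = w := by rw [ha]; simp
    have hova : o v a = w := by
      rw [← hva]; exact hadd v a (by rw [hva]; exact hv.symm)
    have hoav : o a⁻¹ v⁻¹ = w⁻¹ := by
      have : a⁻¹ * v⁻¹ = w⁻¹ := by rw [← hva]; simp
      rw [← this]
      refine hadd a⁻¹ v⁻¹ ?_
      rw [this, cs.length_inv, cs.length_inv, cs.length_inv]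
      omega
    have hz2 : o a⁻¹ (o (o v⁻¹ v) a) = z := by
      calc o a⁻¹ (o (o v⁻¹ v) a) = o a⁻¹ (o v⁻¹ (o v a)) := by rw [hassoc]
        _ = o (o a⁻¹ v⁻¹) (o v a) := (hassoc _ _ _).symm
        _ = o w⁻¹ w := by rw [hoav, hova]
        _ = z := hwz
    have hwz' : o (o u a)⁻¹ (o u a) = z := by
      calc o (o u a)⁻¹ (o u a) = o (o a⁻¹ u⁻¹) (o u a) := by rw [keyinv]
        _ = o a⁻¹ (o u⁻¹ (o u a)) := hassoc _ _ _
        _ = o a⁻¹ (o (o u⁻¹ u) a) := by rw [hassoc]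
        _ = o a⁻¹ (o (o v⁻¹ v) a) := by rw [hu]
        _ = z := hz2
    have h1 : cs.length w ≤ cs.length (o u a) := hwmin _ hwz'
    have h2 : cs.length (o u a) ≤ cs.length u + cs.length a := keylen u a
    omega
end

section
/- Let W_n be the group of signed permutations of {±1,...,±n}, i.e., bijections w of [±n] with w(-i) = -w(i). If w ∈ W_n has w(i) > w(i+1) > w(i+2) for some i ∈ [n-2], then w⁻¹ is not an atom of any involution in W_n. -/
/-- The hyperoctahedral group `W_n`: bijections `w` of `ℤ` with `w (-i) = -(w i)` for
all `i`, fixing every `i` with `|i| > n`.  This is the group of signed permutations of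
`[±n] = {-n, …, -1, 1, …, n}`. -/
def WB (n : ℕ) : Subgroup (Equiv.Perm ℤ) where
  carrier := {w | (∀ i : ℤ, w (-i) = -(w i)) ∧ ∀ i : ℤ, (n : ℤ) < |i| → w i = i}
  one_mem' := by
    constructor <;> intro i <;> simp
  mul_mem' := by
    rintro u v ⟨hu1, hu2⟩ ⟨hv1, hv2⟩
    constructor
    · intro i
      simp only [Equiv.Perm.mul_apply, hv1, hu1]
    · intro i hi
      simp only [Equiv.Perm.mul_apply, hv2 i hi, hu2 i hi]
  inv_mem' := by
    rintro w ⟨h1, h2⟩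
    constructor
    · intro i
      apply w.injective
      rw [Equiv.Perm.coe_inv, Equiv.apply_symm_apply, h1, Equiv.apply_symm_apply]
    · intro i hi
      apply w.injective
      rw [Equiv.Perm.coe_inv, Equiv.apply_symm_apply, h2 i hi]

/-- The standard Coxeter generators of `W_n`: `tB 0 = (-1, 1)` and
`tB i = (i, i+1)(-i, -i-1)` for `i ≥ 1`. -/
def tB : ℕ → Equiv.Perm ℤ
  | 0 => Equiv.swap (-1) 1
  | (k + 1) => Equiv.swap ((k : ℤ) + 1) ((k : ℤ) + 2) *
      Equiv.swap (-((k : ℤ) + 1)) (-((k : ℤ) + 2))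

/-- The Coxeter length of an element of `W_n`: the least length of a word in the
generators `tB 0, …, tB (n-1)` whose product is the given element. -/
noncomputable def lenB (n : ℕ) (w : WB n) : ℕ :=
  sInf {l | ∃ word : List (Fin n), word.length = l ∧
    (word.map (fun i => tB i)).prod = (w : Equiv.Perm ℤ)}

/-- The set of atoms of `z`: the minimal length elements `w` with `w⁻¹ ∘ w = z`. -/
def AtomsB (n : ℕ) (o : WB n → WB n → WB n) (z : WB n) : Set (WB n) :=
  {w | o w⁻¹ w = z ∧ ∀ v : WB n, o v⁻¹ v = z → lenB n w ≤ lenB n v}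


/-!
If `w(i) > w(i+1) > w(i+2)`, then `s = t_i` and `t = t_{i+1}` are both right descents of `w`,
so `w = a · s t s` is a reduced factorisation with `a = w s t s`. By the Demazure axioms, a
letter ending a reduced word is absorbed into the right factor whenever it is also a left
descent of that factor; in this way both `w ∘ w⁻¹` and `(w t) ∘ (t w⁻¹)` collapse to `a ∘ w⁻¹`.
Hence `v = t w⁻¹` satisfies `v⁻¹ ∘ v = w ∘ w⁻¹` and is shorter than `w⁻¹`. The lengths are
computed through the type-B inversion number, which is the Coxeter length because right
multiplication by `t_j` lowers it by one exactly at a descent and raises it by one otherwise.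
-/

open Equiv

structure IsDemazureProduct {G : Type*} [Mul G] (ℓ : G → ℕ) (o : G → G → G) : Prop where
  assoc : ∀ u v w, o (o u v) w = o u (o v w)
  idem : ∀ s, ℓ s = 1 → o s s = s
  eq_mul_of_length_add : ∀ u v, ℓ u + ℓ v = ℓ (u * v) → o u v = u * v

namespace IsDemazureProduct

variable {G : Type*} [Group G] {ℓ : G → ℕ} {o : G → G → G} {s : G}

theorem left_absorb (hD : IsDemazureProduct ℓ o) (hs : ℓ s = 1) (hss : s * s = 1) {y : G}
    (hy : ℓ (s * y) + 1 = ℓ y) : o s y = y := by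
  have hssy : s * (s * y) = y := by rw [← mul_assoc, hss, one_mul]
  have h : o s (s * y) = y := by
    rw [hD.eq_mul_of_length_add s (s * y) (by rw [hssy]; omega), hssy]
  calc o s y = o (o s s) (s * y) := by rw [hD.assoc, h]
    _ = y := by rw [hD.idem s hs, h]

theorem mul_left_of_descent (hD : IsDemazureProduct ℓ o) (hs : ℓ s = 1) (hss : s * s = 1)
    {x y : G} (hx : ℓ x + 1 = ℓ (x * s)) (hy : ℓ (s * y) + 1 = ℓ y) :
    o (x * s) y = o x y := by
  rw [← hD.eq_mul_of_length_add x s (by rw [hs, hx]), hD.assoc, hD.left_absorb hs hss hy]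

theorem mul_left_of_ascent (hD : IsDemazureProduct ℓ o) (hs : ℓ s = 1) {x y : G}
    (hx : ℓ x + 1 = ℓ (x * s)) (hy : ℓ y + 1 = ℓ (s * y)) :
    o (x * s) y = o x (s * y) := by
  rw [← hD.eq_mul_of_length_add x s (by rw [hs, hx]), hD.assoc,
    hD.eq_mul_of_length_add s y (by rw [hs, ← hy, add_comm])]

theorem exists_shorter_of_braid (hD : IsDemazureProduct ℓ o) (hinv : ∀ x, ℓ x⁻¹ = ℓ x)
    {w t : G} (hs : ℓ s = 1) (ht : ℓ t = 1) (hss : s * s = 1) (htt : t * t = 1)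
    (hbraid : s * t * s = t * s * t)
    (h₁ : ℓ (w * s) + 1 = ℓ w) (h₂ : ℓ (w * s * t) + 1 = ℓ (w * s))
    (h₃ : ℓ (w * s * t * s) + 1 = ℓ (w * s * t))
    (h₄ : ℓ (w * t) + 1 = ℓ w) (h₅ : ℓ (w * t * s) + 1 = ℓ (w * t)) :
    ∃ v, o v⁻¹ v = o w w⁻¹ ∧ ℓ v < ℓ w⁻¹ := by
  have hs' : s⁻¹ = s := inv_eq_of_mul_eq_one_right hss
  have ht' : t⁻¹ = t := inv_eq_of_mul_eq_one_right htt
  have cancel : ∀ x r : G, r * r = 1 → x * r * r = x := fun x r hr => by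
    rw [mul_assoc, hr, mul_one]
  have hsw : ℓ (s * w⁻¹) + 1 = ℓ w⁻¹ := by
    rw [show s * w⁻¹ = (w * s)⁻¹ by rw [mul_inv_rev, hs'], hinv, hinv, h₁]
  have htw : ℓ (t * w⁻¹) + 1 = ℓ w⁻¹ := by
    rw [show t * w⁻¹ = (w * t)⁻¹ by rw [mul_inv_rev, ht'], hinv, hinv, h₄]
  have hstw : ℓ (s * (t * w⁻¹)) + 1 = ℓ (t * w⁻¹) := by
    rw [show s * (t * w⁻¹) = (w * t * s)⁻¹ by rw [mul_inv_rev, mul_inv_rev, hs', ht'],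
      show t * w⁻¹ = (w * t)⁻¹ by rw [mul_inv_rev, ht'], hinv, hinv, h₅]
  have hwts : w * s * t * s * t = w * t * s := by
    calc w * s * t * s * t = w * (s * t * s) * t := by simp only [mul_assoc]
      _ = w * t * s * (t * t) := by rw [hbraid]; simp only [mul_assoc]
      _ = w * t * s := by rw [htt, mul_one]
  have hw : o w w⁻¹ = o (w * s * t * s) w⁻¹ :=
    calc o w w⁻¹ = o (w * s * s) w⁻¹ := by rw [cancel w s hss]
      _ = o (w * s) w⁻¹ := hD.mul_left_of_descent hs hss (by rw [cancel w s hss, h₁]) hsw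
      _ = o (w * s * t * t) w⁻¹ := by rw [cancel _ t htt]
      _ = o (w * s * t) w⁻¹ := hD.mul_left_of_descent ht htt (by rw [cancel _ t htt, h₂]) htw
      _ = o (w * s * t * s * s) w⁻¹ := by rw [cancel _ s hss]
      _ = o (w * s * t * s) w⁻¹ := hD.mul_left_of_descent hs hss (by rw [cancel _ s hss, h₃]) hsw
  have hwt : o (w * t) (t * w⁻¹) = o (w * s * t * s) w⁻¹ :=
    calc o (w * t) (t * w⁻¹) = o (w * t * s * s) (t * w⁻¹) := by rw [cancel _ s hss]
      _ = o (w * t * s) (t * w⁻¹) :=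
          hD.mul_left_of_descent hs hss (by rw [cancel _ s hss, h₅]) hstw
      _ = o (w * s * t * s * t) (t * w⁻¹) := by rw [hwts]
      _ = o (w * s * t * s) (t * (t * w⁻¹)) :=
          hD.mul_left_of_ascent ht (by rw [hwts]; omega) (by rw [← mul_assoc, htt, one_mul, htw])
      _ = o (w * s * t * s) w⁻¹ := by rw [← mul_assoc, htt, one_mul]
  refine ⟨t * w⁻¹, ?_, ?_⟩
  · rw [mul_inv_rev, inv_inv, ht', hwt, hw]
  · omega

end IsDemazureProduct

theorem tB_zero_apply (x : ℤ) : tB 0 x = if x = -1 then 1 else if x = 1 then -1 else x := by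
  simp [tB, swap_apply_def]

theorem tB_apply_of_pos {j : ℕ} (hj : 1 ≤ j) (x : ℤ) :
    tB j x = if x = j then (j : ℤ) + 1 else if x = j + 1 then (j : ℤ)
      else if x = -j then -(j : ℤ) - 1 else if x = -j - 1 then -(j : ℤ) else x := by
  obtain ⟨k, rfl⟩ : ∃ k, j = k + 1 := ⟨j - 1, by omega⟩
  simp only [tB, Perm.mul_apply, swap_apply_def]
  push_cast
  split_ifs <;> omega

theorem tB_apply_of_one_le {j : ℕ} (hj : 1 ≤ j) {x : ℤ} (hx : 1 ≤ x) :
    tB j x = if x = j then (j : ℤ) + 1 else if x = j + 1 then (j : ℤ) else x := by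
  rw [tB_apply_of_pos hj]
  split_ifs <;> omega

theorem tB_apply_self {j : ℕ} (hj : 1 ≤ j) : tB j j = j + 1 := by
  rw [tB_apply_of_pos hj, if_pos rfl]

theorem tB_apply_add_one {j : ℕ} (hj : 1 ≤ j) : tB j (j + 1) = j := by
  rw [tB_apply_of_pos hj]
  split_ifs <;> omega

theorem tB_mul_self (j : ℕ) : tB j * tB j = 1 := by
  rcases Nat.eq_zero_or_pos j with rfl | hj
  · simp [tB]
  · ext x
    simp only [Perm.mul_apply, Perm.one_apply, tB_apply_of_pos hj]
    split_ifs <;> omega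

theorem tB_apply_tB_apply (j : ℕ) (x : ℤ) : tB j (tB j x) = x := by
  rw [← Perm.mul_apply, tB_mul_self, Perm.one_apply]

theorem tB_mem {n j : ℕ} (h : j < n) : tB j ∈ WB n := by
  rcases Nat.eq_zero_or_pos j with rfl | hj
  · refine ⟨fun x => ?_, fun x hx => ?_⟩ <;> simp only [tB_zero_apply] <;> split_ifs <;>
      cases abs_cases x <;> omega
  · refine ⟨fun x => ?_, fun x hx => ?_⟩ <;> simp only [tB_apply_of_pos hj] <;> split_ifs <;>
      cases abs_cases x <;> omega

theorem tB_braid {i : ℕ} (hi : 1 ≤ i) :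
    tB i * tB (i + 1) * tB i = tB (i + 1) * tB i * tB (i + 1) := by
  ext x
  have key : x = i ∨ x = i + 1 ∨ x = i + 2 ∨ x = -i ∨ x = -i - 1 ∨ x = -i - 2 ∨
      (x ≠ i ∧ x ≠ i + 1 ∧ x ≠ i + 2 ∧ x ≠ -i ∧ x ≠ -i - 1 ∧ x ≠ -i - 2) := by omega
  rcases key with rfl | rfl | rfl | rfl | rfl | rfl | _ <;>
    simp (disch := omega) only [Perm.mul_apply, tB_apply_of_pos hi,
      tB_apply_of_pos (Nat.le_add_left 1 i), Nat.cast_add, Nat.cast_one, neg_add', if_pos, if_neg,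
      ↓reduceIte]

section WB
variable {n : ℕ} {u : Perm ℤ}

theorem WB_apply_ne_zero (hu : u ∈ WB n) {x : ℤ} (hx : x ≠ 0) : u x ≠ 0 := by
  have h0 : u 0 = 0 := by have := hu.1 0; simp only [neg_zero] at this; omega
  exact fun h => hx (u.injective (h.trans h0.symm))

theorem abs_WB_apply_le (hu : u ∈ WB n) {x : ℤ} (hx : |x| ≤ n) : |u x| ≤ n := by
  by_contra h
  have hfix := hu.2 (u x) (not_le.1 h)
  rw [u.injective hfix] at h
  exact h hx

end WB

def invTerm (a b x y : ℤ) : ℕ :=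
  (if a < b ∧ y < x then 1 else 0) + (if a ≤ b ∧ x + y < 0 then 1 else 0)

/-- The type-B inversion number `inv + neg + nsp` of Björner–Brenti: the diagonal
`a = b` of the second summand counts the negative entries. -/
noncomputable def invB (n : ℕ) (u : Perm ℤ) : ℕ :=
  ∑ p ∈ Finset.Icc (1 : ℤ) n ×ˢ Finset.Icc (1 : ℤ) n, invTerm p.1 p.2 (u p.1) (u p.2)

theorem invB_one (n : ℕ) : invB n 1 = 0 :=
  Finset.sum_eq_zero fun p hp => by
    simp only [Finset.mem_product, Finset.mem_Icc] at hp
    rw [invTerm, Perm.one_apply, Perm.one_apply, if_neg (by omega), if_neg (by omega), add_zero]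

theorem invB_mul_of_involutive {n : ℕ} (u : Perm ℤ) {σ : Perm ℤ} (hσ : ∀ x, σ (σ x) = x)
    (hmaps : ∀ x ∈ Finset.Icc (1 : ℤ) n, σ x ∈ Finset.Icc (1 : ℤ) n) :
    invB n (u * σ) = ∑ p ∈ Finset.Icc (1 : ℤ) n ×ˢ Finset.Icc (1 : ℤ) n,
      invTerm (σ p.1) (σ p.2) (u p.1) (u p.2) := by
  refine Finset.sum_equiv (.prodCongr σ σ) (fun p => ?_) (fun p _ => ?_)
  · simp only [Finset.mem_product, prodCongr_apply, Prod.map_fst, Prod.map_snd]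
    exact ⟨fun h => ⟨hmaps _ h.1, hmaps _ h.2⟩,
      fun h => ⟨hσ p.1 ▸ hmaps _ h.1, hσ p.2 ▸ hmaps _ h.2⟩⟩
  · simp [hσ]

theorem invB_eq_invB_mul_tB_add_one {n j : ℕ} (hj : 1 ≤ j) (hjn : j + 1 ≤ n) {u : Perm ℤ}
    (h : u (j + 1) < u j) : invB n u = invB n (u * tB j) + 1 := by
  have hmaps : ∀ x ∈ Finset.Icc (1 : ℤ) n, tB j x ∈ Finset.Icc (1 : ℤ) n := by
    intro x hx
    simp only [Finset.mem_Icc] at hx ⊢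
    rw [tB_apply_of_one_le hj hx.1]
    split_ifs <;> omega
  set P := Finset.Icc (1 : ℤ) n ×ˢ Finset.Icc (1 : ℤ) n
  set Q : Finset (ℤ × ℤ) := {((j : ℤ), (j : ℤ) + 1), ((j : ℤ) + 1, (j : ℤ))}
  have hQ : Q ⊆ P := by
    intro p hp
    simp only [Q, Finset.mem_insert, Finset.mem_singleton] at hp
    simp only [P, Finset.mem_product, Finset.mem_Icc]
    rcases hp with rfl | rfl <;> omega
  -- off the pair `{j, j + 1}`, `tB j` preserves the relative order of positions in `[1, n]`
  have hrest : ∀ p ∈ P \ Q, invTerm (tB j p.1) (tB j p.2) (u p.1) (u p.2) =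
      invTerm p.1 p.2 (u p.1) (u p.2) := by
    intro p hp
    simp only [P, Q, Finset.mem_sdiff, Finset.mem_product, Finset.mem_Icc, Finset.mem_insert,
      Finset.mem_singleton, Prod.ext_iff] at hp
    have hlt : tB j p.1 < tB j p.2 ↔ p.1 < p.2 := by
      rw [tB_apply_of_one_le hj hp.1.1.1, tB_apply_of_one_le hj hp.1.2.1]; split_ifs <;> omega
    have hle : tB j p.1 ≤ tB j p.2 ↔ p.1 ≤ p.2 := by
      rw [tB_apply_of_one_le hj hp.1.1.1, tB_apply_of_one_le hj hp.1.2.1]; split_ifs <;> omega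
    simp only [invTerm, hlt, hle]
  rw [invB_mul_of_involutive u (tB_apply_tB_apply j) hmaps, invB, ← Finset.sum_sdiff hQ,
    ← Finset.sum_sdiff hQ, Finset.sum_congr rfl hrest,
    Finset.sum_pair (by simp), Finset.sum_pair (by simp)]
  simp (disch := omega) only [invTerm, tB_apply_self hj, tB_apply_add_one hj, if_pos, if_neg]
  split_ifs <;> omega

theorem invB_eq_invB_mul_tB_zero_add_one {n : ℕ} {u : Perm ℤ} (hu : u ∈ WB n) (h : u 1 < 0) :
    invB n u = invB n (u * tB 0) + 1 := by
  have hn : (1 : ℤ) ≤ n := by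
    by_contra hn
    have := hu.2 1 (by simp only [abs_one]; omega)
    omega
  have hval : ∀ x : ℤ, 1 ≤ x → (u * tB 0) x = if x = 1 then -u 1 else u x := by
    intro x hx
    rw [Perm.mul_apply, tB_zero_apply, if_neg (by omega)]
    split_ifs
    · exact hu.1 1
    · rfl
  have h11 : ((1 : ℤ), (1 : ℤ)) ∈ Finset.Icc (1 : ℤ) n ×ˢ Finset.Icc (1 : ℤ) n := by
    simp only [Finset.mem_product, Finset.mem_Icc]; omega
  -- changing the sign of `u 1` swaps the two summands of every pair `(1, b)` with `b ≠ 1`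
  have hrest : ∀ p ∈ (Finset.Icc (1 : ℤ) n ×ˢ Finset.Icc (1 : ℤ) n).erase (1, 1),
      invTerm p.1 p.2 ((u * tB 0) p.1) ((u * tB 0) p.2) = invTerm p.1 p.2 (u p.1) (u p.2) := by
    rintro ⟨a, b⟩ hp
    simp only [Finset.mem_erase, Finset.mem_product, Finset.mem_Icc, ne_eq, Prod.ext_iff] at hp
    rw [hval a hp.2.1.1, hval b hp.2.2.1]
    split_ifs with ha hb hb
    · omega
    · have h₁ : u b ≠ u 1 := fun he => by have := u.injective he; omega
      have h₂ : u b ≠ -u 1 := fun he => by rw [← hu.1] at he; have := u.injective he; omega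
      subst ha
      simp only [invTerm]
      split_ifs <;> omega
    · simp only [invTerm]
      split_ifs <;> omega
    · rfl
  rw [invB, invB, ← Finset.add_sum_erase _ _ h11, ← Finset.add_sum_erase _ _ h11,
    Finset.sum_congr rfl hrest, hval 1 le_rfl]
  simp only [invTerm, ↓reduceIte]
  split_ifs <;> omega

def IsDescentB (u : Perm ℤ) (j : ℕ) : Prop :=
  if j = 0 then u 1 < 0 else u (j + 1) < u j

section Descent
variable {n j : ℕ} {u : Perm ℤ}

theorem invB_eq_invB_mul_add_one_of_isDescentB (hu : u ∈ WB n) (hj : j < n)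
    (h : IsDescentB u j) : invB n u = invB n (u * tB j) + 1 := by
  unfold IsDescentB at h
  split_ifs at h with hj0
  · subst hj0
    exact invB_eq_invB_mul_tB_zero_add_one hu h
  · exact invB_eq_invB_mul_tB_add_one (by omega) hj h

theorem isDescentB_or_isDescentB_mul_tB (hu : u ∈ WB n) (j : ℕ) :
    IsDescentB u j ∨ IsDescentB (u * tB j) j := by
  unfold IsDescentB
  split_ifs with hj0
  · rw [Perm.mul_apply, hj0, tB_zero_apply, if_neg (by omega), if_pos rfl, hu.1]
    have := WB_apply_ne_zero hu one_ne_zero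
    omega
  · rw [Perm.mul_apply, Perm.mul_apply, tB_apply_self (by omega), tB_apply_add_one (by omega)]
    have : u (j + 1) ≠ u j := fun h => by have := u.injective h; omega
    omega

theorem invB_mul_tB_le (hu : u ∈ WB n) (hj : j < n) : invB n (u * tB j) ≤ invB n u + 1 := by
  rcases isDescentB_or_isDescentB_mul_tB hu j with h | h
  · have := invB_eq_invB_mul_add_one_of_isDescentB hu hj h
    omega
  · have := invB_eq_invB_mul_add_one_of_isDescentB (mul_mem hu (tB_mem hj)) hj h
    rw [mul_assoc, tB_mul_self, mul_one] at this
    omega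

theorem eq_one_of_forall_not_isDescentB (hu : u ∈ WB n) (h : ∀ j < n, ¬IsDescentB u j) :
    u = 1 := by
  have hinj : ∀ x y, u x = u y → x = y := fun _ _ => u.injective.eq_iff.1
  have hpos : 0 < u 1 := by
    rcases Nat.eq_zero_or_pos n with rfl | hn
    · rw [hu.2 1 (by simp)]
      exact one_pos
    · have h0 := h 0 hn
      have := WB_apply_ne_zero hu one_ne_zero
      simp only [IsDescentB, ↓reduceIte, not_lt] at h0
      omega
  have hasc : ∀ x : ℤ, 1 ≤ x → x < n → u x < u (x + 1) := by
    intro x hx hxn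
    have hx' := h x.toNat (by omega)
    simp only [IsDescentB, if_neg (by omega : x.toNat ≠ 0),
      Int.toNat_of_nonneg (by omega : 0 ≤ x), not_lt] at hx'
    have := hinj (x + 1) x
    omega
  -- an increasing sequence `u 1 < ⋯ < u n` in `[1, n]` is the identity
  have hge : ∀ x : ℤ, 1 ≤ x → x ≤ n → x ≤ u x := by
    intro x hx
    induction x, hx using Int.leInduction with
    | base => intro; omega
    | succ x hx ih =>
      intro hxn
      have := hasc x hx (by omega)
      have := ih (by omega)
      omega
  have hle : ∀ x : ℤ, x ≤ n → 1 ≤ x → u x ≤ x := by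
    intro x hx
    induction x, hx using Int.leInductionDown with
    | base =>
      intro
      have := abs_WB_apply_le hu (x := n) (by simp)
      rw [abs_le] at this
      omega
    | pred x hx ih =>
      intro hx1
      have hstep := hasc (x - 1) hx1 (by omega)
      rw [sub_add_cancel] at hstep
      have := ih (by omega)
      omega
  have hfix : ∀ x : ℤ, 1 ≤ x → x ≤ n → u x = x := fun x h₁ h₂ =>
    le_antisymm (hle x h₂ h₁) (hge x h₁ h₂)
  ext x
  rw [Perm.one_apply]
  rcases lt_or_ge (n : ℤ) |x| with hx | hx
  · exact hu.2 x hx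
  rcases lt_trichotomy x 0 with hx0 | rfl | hx0
  · have := hu.1 (-x)
    rw [neg_neg, hfix (-x) (by omega) (by rw [abs_le] at hx; omega)] at this
    omega
  · have := hu.1 0
    rw [neg_zero] at this
    omega
  · exact hfix x hx0 (by rw [abs_le] at hx; omega)

end Descent

theorem exists_word_of_mem_WB {n : ℕ} {u : Perm ℤ} (hu : u ∈ WB n) :
    ∃ l : List (Fin n), l.length = invB n u ∧ (l.map fun i : Fin n => tB i).prod = u := by
  induction hm : invB n u using Nat.strong_induction_on generalizing u with
  | _ m ih =>
    by_cases hd : ∃ j < n, IsDescentB u j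
    · obtain ⟨j, hj, hdj⟩ := hd
      have hstep := invB_eq_invB_mul_add_one_of_isDescentB hu hj hdj
      obtain ⟨l, hl, hprod⟩ := ih _ (by omega) (mul_mem hu (tB_mem hj)) rfl
      refine ⟨l ++ [⟨j, hj⟩], by simp only [List.length_append, List.length_singleton]; omega, ?_⟩
      rw [List.map_append, List.prod_append, hprod, List.map_singleton, List.prod_singleton,
        mul_assoc, tB_mul_self, mul_one]
    · push Not at hd
      obtain rfl := eq_one_of_forall_not_isDescentB hu hd
      exact ⟨[], by rw [← hm, invB_one, List.length_nil], rfl⟩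

theorem invB_mul_prod_le {n : ℕ} (l : List (Fin n)) {u : Perm ℤ} (hu : u ∈ WB n) :
    invB n (u * (l.map fun i : Fin n => tB i).prod) ≤ invB n u + l.length := by
  induction l generalizing u with
  | nil => simp
  | cons j l ih =>
    rw [List.map_cons, List.prod_cons, ← mul_assoc, List.length_cons]
    have := ih (mul_mem hu (tB_mem j.2))
    have := invB_mul_tB_le hu j.2
    omega

-- The words in `lenB` are coerced to `List ℕ` through the list monad.
theorem lenB_eq_sInf {n : ℕ} (u : WB n) : lenB n u =
    sInf {m | ∃ l : List (Fin n), l.length = m ∧ (l.map fun i : Fin n => tB i).prod = u} := by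
  simp only [lenB, List.pure_def, List.bind_eq_flatMap, ← List.map_eq_flatMap, List.map_map]
  rfl

theorem lenB_le_length {n : ℕ} {u : WB n} {l : List (Fin n)}
    (h : (l.map fun i : Fin n => tB i).prod = u) : lenB n u ≤ l.length :=
  lenB_eq_sInf u ▸ Nat.sInf_le ⟨l, rfl, h⟩

theorem lenB_eq_invB {n : ℕ} (u : WB n) : lenB n u = invB n u := by
  obtain ⟨l, hl, hprod⟩ := exists_word_of_mem_WB u.2
  refine le_antisymm (hl ▸ lenB_le_length hprod) ?_
  rw [lenB_eq_sInf]
  refine le_csInf ⟨_, l, rfl, hprod⟩ ?_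
  rintro _ ⟨l', rfl, hprod'⟩
  simpa [← hprod', invB_one] using invB_mul_prod_le l' (one_mem (WB n))

theorem lenB_inv {n : ℕ} (u : WB n) : lenB n u⁻¹ = lenB n u := by
  suffices h : ∀ v : WB n, lenB n v⁻¹ ≤ lenB n v from
    le_antisymm (h u) (by simpa using h u⁻¹)
  intro v
  obtain ⟨l, hl, hprod⟩ := exists_word_of_mem_WB v.2
  rw [lenB_eq_invB v, ← hl, ← List.length_reverse]
  refine lenB_le_length ?_
  rw [Subgroup.coe_inv, ← hprod, List.prod_inv_reverse, List.map_reverse, List.map_map]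
  simp [Function.comp_def, inv_eq_of_mul_eq_one_right (tB_mul_self _)]

def sB {n : ℕ} (j : Fin n) : WB n := ⟨tB j, tB_mem j.2⟩

theorem sB_mul_self {n : ℕ} (j : Fin n) : sB j * sB j = 1 :=
  Subtype.ext (tB_mul_self j)

theorem sB_braid {n i : ℕ} (hi : 1 ≤ i) (hin : i + 1 < n) :
    sB ⟨i, by omega⟩ * sB ⟨i + 1, hin⟩ * sB ⟨i, by omega⟩ =
      sB ⟨i + 1, hin⟩ * sB ⟨i, by omega⟩ * sB ⟨i + 1, hin⟩ :=
  Subtype.ext (tB_braid hi)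

theorem lenB_mul_sB_add_one {n : ℕ} {u : WB n} {j : Fin n} (h : IsDescentB u j) :
    lenB n (u * sB j) + 1 = lenB n u := by
  rw [lenB_eq_invB, lenB_eq_invB]
  exact (invB_eq_invB_mul_add_one_of_isDescentB u.2 j.2 h).symm

theorem lenB_sB {n : ℕ} (j : Fin n) : lenB n (sB j) = 1 := by
  have h : IsDescentB (tB j) j := by
    unfold IsDescentB
    split_ifs with hj0
    · rw [hj0, tB_zero_apply]
      simp
    · rw [tB_apply_self (by omega), tB_apply_add_one (by omega)]
      omega
  have := lenB_mul_sB_add_one (u := sB j) h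
  rwa [sB_mul_self, lenB_eq_invB, OneMemClass.coe_one, invB_one, zero_add, eq_comm] at this

theorem isDescentB_of_decreasing_triple {w : Perm ℤ} {i : ℕ} (hi : 1 ≤ i)
    (hd₁ : w (i + 1) < w i) (hd₂ : w (i + 2) < w (i + 1)) :
    IsDescentB w i ∧ IsDescentB (w * tB i) (i + 1) ∧ IsDescentB (w * tB i * tB (i + 1)) i ∧
      IsDescentB w (i + 1) ∧ IsDescentB (w * tB (i + 1)) i := by
  simp (disch := omega) only [IsDescentB, Perm.mul_apply, tB_apply_of_one_le, Nat.cast_add,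
    Nat.cast_one, if_pos, if_neg, ↓reduceIte, add_assoc, one_add_one_eq_two]
  exact ⟨hd₁, hd₂.trans hd₁, hd₂, hd₂, hd₂.trans hd₁⟩

/-- If `w ∈ W_n` has `w(i) > w(i+1) > w(i+2)` for some `i ∈ [n-2]` (a
consecutive 321-pattern), then `w⁻¹` is not an atom of any involution in `W_n`.  Here
`o` is the Demazure product of `W_n` (the associative product with `s ∘ s = s` for each
length-one element `s` and `u ∘ v = u * v` whenever lengths add). -/
theorem stmt_4 (n : ℕ) (o : WB n → WB n → WB n)
    (hassoc : ∀ u v w : WB n, o (o u v) w = o u (o v w))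
    (hgen : ∀ s : WB n, lenB n s = 1 → o s s = s)
    (hadd : ∀ u v : WB n, lenB n u + lenB n v = lenB n (u * v) → o u v = u * v)
    (w : WB n) (i : ℕ) (hi1 : 1 ≤ i) (hi2 : i + 2 ≤ n)
    (hd1 : (w : Equiv.Perm ℤ) ((i : ℤ) + 1) < (w : Equiv.Perm ℤ) (i : ℤ))
    (hd2 : (w : Equiv.Perm ℤ) ((i : ℤ) + 2) < (w : Equiv.Perm ℤ) ((i : ℤ) + 1)) :
    ∀ z : WB n, z * z = 1 → w⁻¹ ∉ AtomsB n o z := by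
  rintro z - ⟨hz, hmin⟩
  have hD : IsDemazureProduct (lenB n) o := ⟨hassoc, hgen, hadd⟩
  obtain ⟨d₁, d₂, d₃, d₄, d₅⟩ := isDescentB_of_decreasing_triple hi1 hd1 hd2
  have hin : i + 1 < n := by omega
  obtain ⟨v, hv, hlt⟩ := hD.exists_shorter_of_braid lenB_inv (lenB_sB _) (lenB_sB _)
    (sB_mul_self _) (sB_mul_self _) (sB_braid hi1 hin)
    (lenB_mul_sB_add_one (u := w) d₁) (lenB_mul_sB_add_one (u := w * sB _) d₂)
    (lenB_mul_sB_add_one (u := w * sB _ * sB _) d₃) (lenB_mul_sB_add_one (u := w) d₄)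
    (lenB_mul_sB_add_one (u := w * sB _) d₅)
  rw [inv_inv] at hz
  exact (hmin v (hv.trans hz)).not_gt hlt
end

section
/- The number of symmetric noncrossing perfect matchings on the set [±n] = {−n,...,−1,1,...,n} equals the central binomial coefficient C(n, ⌊n/2⌋). -/
/-- The set `[±n] = {-n, …, -1, 1, …, n}`. -/
def pmSet (n : ℕ) : Set ℤ := {i | i ≠ 0 ∧ |i| ≤ (n : ℤ)}

/-- A symmetric noncrossing perfect matching on `[±n]`: a set `M` of pairwise disjoint
2-element subsets of `[±n]` covering `[±n]`, closed under negation, with no two blocks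
`{i,k}, {j,l}` satisfying `i < j < k < l`. -/
def IsNCSP (n : ℕ) (M : Finset (Finset ℤ)) : Prop :=
  (∀ b ∈ M, b.card = 2 ∧ (b : Set ℤ) ⊆ pmSet n) ∧
  (∀ b ∈ M, ∀ b' ∈ M, b ≠ b' → Disjoint b b') ∧
  (∀ i ∈ pmSet n, ∃ b ∈ M, i ∈ b) ∧
  (∀ b ∈ M, b.image (fun x => -x) ∈ M) ∧
  (∀ i j k l : ℤ, ({i, k} : Finset ℤ) ∈ M → ({j, l} : Finset ℤ) ∈ M →
    i < j → j < k → k < l → False)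

/-!
Read a symmetric noncrossing perfect matching on its positive half `1, …, n` as a word of up and
down steps: `x` is a down step when its partner is a smaller positive number, and an up step
otherwise (its partner is larger, or is `-x`). Sending each down step to its partner matches the
down steps of every prefix injectively to up steps of that prefix, so the word is a ballot word:
no prefix goes below height `0`. Conversely, a ballot word pairs each down step with the last
earlier up step at the same level, as in a Dyck path, and matches every up step after which the
path never returns to its level with its negative; mirroring gives the negative half. Noncrossing
forces the blocks of a matching to be exactly these pairs, so the two constructions are mutually
inverse. By Pascal's rule on the last step, the ballot words of length `n` ending at height at
least `h` number `C(n, ⌊(n - h)/2⌋)`.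
-/

namespace SymmetricNoncrossing

open Finset

variable {n : ℕ}

theorem mem_pmSet_iff {x : ℤ} : x ∈ pmSet n ↔ x ≠ 0 ∧ -(n : ℤ) ≤ x ∧ x ≤ n := by
  simp only [pmSet, Set.mem_ofPred_eq, abs_le]

def step (w : Fin n → Bool) (s : ℕ) : ℤ :=
  if h : s < n then (if w ⟨s, h⟩ then 1 else -1) else 0

def height (w : Fin n → Bool) (t : ℕ) : ℤ := ∑ s ∈ range t, step w s

def IsBallot (w : Fin n → Bool) : Prop := ∀ t, 0 ≤ height w t

def IsArc (w : Fin n → Bool) (p q : ℕ) : Prop :=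
  p < q ∧ q < n ∧ height w (q + 1) = height w p ∧
    ∀ t, p < t → t ≤ q → height w p < height w t

def IsUnmatched (w : Fin n → Bool) (p : ℕ) : Prop :=
  p < n ∧ ∀ t, p < t → t ≤ n → height w p < height w t

section Path

variable {w : Fin n → Bool} {p q r s t : ℕ}

theorem step_eq_one_or (hs : s < n) : step w s = 1 ∨ step w s = -1 := by
  unfold step; split_ifs <;> simp

theorem step_of_le (hs : n ≤ s) : step w s = 0 := dif_neg (by omega)

theorem abs_step_le_one (s : ℕ) : |step w s| ≤ 1 := by
  unfold step; split_ifs <;> simp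

@[simp] theorem height_zero : height w 0 = 0 := rfl

theorem height_succ (t : ℕ) : height w (t + 1) = height w t + step w t :=
  sum_range_succ _ _

theorem height_succ_le (t : ℕ) : height w (t + 1) ≤ height w t + 1 := by
  have := abs_step_le_one (w := w) t; rw [height_succ]; grind

theorem height_le_height_succ (t : ℕ) : height w t - 1 ≤ height w (t + 1) := by
  have := abs_step_le_one (w := w) t; rw [height_succ]; grind

theorem step_eq_one_iff (hs : s < n) : step w s = 1 ↔ height w s < height w (s + 1) := by
  rcases step_eq_one_or (w := w) hs with h | h <;> rw [height_succ, h] <;> simp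

theorem step_eq_neg_one_iff (hs : s < n) : step w s = -1 ↔ height w (s + 1) < height w s := by
  rcases step_eq_one_or (w := w) hs with h | h <;> rw [height_succ, h] <;> simp

theorem height_sub_height {lo hi : ℕ} (hlo : lo ≤ hi) (hhi : hi ≤ n) :
    height w hi - height w lo =
      #{s ∈ Ico lo hi | step w s = 1} - #{s ∈ Ico lo hi | step w s = -1} := by
  rw [natCast_card_filter, natCast_card_filter, ← sum_sub_distrib, height, height,
    ← sum_Ico_eq_sub _ hlo]
  refine sum_congr rfl fun s hs => ?_
  rcases step_eq_one_or (w := w) (s := s) (by grind) with h | h <;> simp [h]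

theorem height_le (t : ℕ) : height w t ≤ t := by
  induction t with
  | zero => simp
  | succ t ih => have := height_succ_le (w := w) t; push_cast; omega

theorem height_of_le (ht : n ≤ t) : height w t = height w n := by
  induction t, ht using Nat.le_induction with
  | base => rfl
  | succ t ht ih => rw [height_succ, step_of_le ht, ih, add_zero]

theorem IsArc.step_left (h : IsArc w p q) : step w p = 1 :=
  (step_eq_one_iff (by grind [IsArc])).2 (h.2.2.2 _ (by omega) h.1)

theorem IsArc.step_right (h : IsArc w p q) : step w q = -1 := by
  obtain ⟨hpq, hq, heq, hlt⟩ := h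
  exact (step_eq_neg_one_iff hq).2 (heq ▸ hlt q hpq le_rfl)

theorem IsUnmatched.step (h : IsUnmatched w p) : step w p = 1 :=
  (step_eq_one_iff h.1).2 (h.2 _ (by omega) h.1)

theorem IsArc.right_unique (h : IsArc w p q) (h' : IsArc w p r) : q = r := by
  obtain ⟨hpq, -, heq, hlt⟩ := h
  obtain ⟨hpr, -, heq', hlt'⟩ := h'
  by_contra hne
  rcases Nat.lt_or_gt_of_ne hne with hqr | hrq
  · exact (hlt' (q + 1) (by omega) hqr).ne' heq
  · exact (hlt (r + 1) (by omega) hrq).ne' heq'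

theorem IsArc.left_unique (h : IsArc w p r) (h' : IsArc w q r) : p = q := by
  obtain ⟨hpr, -, heq, hlt⟩ := h
  obtain ⟨hqr, -, heq', hlt'⟩ := h'
  by_contra hne
  rcases Nat.lt_or_gt_of_ne hne with hpq | hqp
  · have := hlt q hpq hqr.le; omega
  · have := hlt' p hqp hpr.le; omega

theorem IsArc.eq_of_share (h : IsArc w p q) (h' : IsArc w r s)
    (hshare : p = r ∨ p = s ∨ q = r ∨ q = s) : p = r ∧ q = s := by
  rcases hshare with rfl | rfl | rfl | rfl
  · exact ⟨rfl, h.right_unique h'⟩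
  · have := h.step_left; have := h'.step_right; omega
  · have := h.step_right; have := h'.step_left; omega
  · exact ⟨h.left_unique h', rfl⟩

theorem IsArc.ne_of_isUnmatched (h : IsArc w p q) (hc : IsUnmatched w r) : r ≠ p ∧ r ≠ q := by
  refine ⟨?_, ?_⟩ <;> rintro rfl
  · have := hc.2 (q + 1) (by grind [IsArc]) (by grind [IsArc]); grind [IsArc]
  · have := hc.step; have := h.step_right; omega

theorem IsArc.not_cross (h : IsArc w p q) (h' : IsArc w r s) (hpr : p < r) (hrq : r < q)
    (hqs : q < s) : False := by
  have := h.2.2.2 r hpr hrq.le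
  have := h'.2.2.2 (q + 1) (by omega) (by omega)
  grind [IsArc]

theorem IsArc.not_cover (h : IsArc w p q) (hc : IsUnmatched w r) (hpr : p < r) (hrq : r < q) :
    False := by
  have := h.2.2.2 r hpr hrq.le
  have := hc.2 (q + 1) (by omega) (by grind [IsArc])
  grind [IsArc]

theorem exists_isArc_of_step_eq_neg_one (hw : IsBallot w) (hq : step w q = -1) :
    ∃ p, IsArc w p q := by
  classical
  have hqn : q < n := by by_contra! h; rw [step_of_le h] at hq; omega
  have hdrop := (step_eq_neg_one_iff hqn).1 hq
  let P : ℕ → Prop := fun p => height w p ≤ height w (q + 1)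
  set p := Nat.findGreatest P q
  have hp : P p := Nat.findGreatest_spec (Nat.zero_le q) (by simpa [P] using hw (q + 1))
  have hpq : p ≤ q := Nat.findGreatest_le q
  have habove : ∀ t, p < t → t ≤ q → height w (q + 1) < height w t := fun t ht htq =>
    not_le.1 (Nat.findGreatest_is_greatest ht htq)
  have hpq' : p < q := lt_of_le_of_ne hpq fun h => by simp only [P, h] at hp; omega
  have := habove (p + 1) (by omega) hpq'
  have := height_succ_le (w := w) p
  exact ⟨p, hpq', hqn, by omega, fun t ht htq => by have := habove t ht htq; omega⟩

theorem exists_isArc_or_isUnmatched (hp : step w p = 1) :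
    (∃ q, IsArc w p q) ∨ IsUnmatched w p := by
  classical
  have hpn : p < n := by by_contra! h; rw [step_of_le h] at hp; omega
  have hrise := (step_eq_one_iff hpn).1 hp
  by_cases hdrop : ∃ t, p < t ∧ t ≤ n ∧ height w t ≤ height w p
  · left
    set m := Nat.find hdrop
    obtain ⟨hpm, hmn, hm⟩ : p < m ∧ m ≤ n ∧ height w m ≤ height w p :=
      Nat.find_spec hdrop
    have habove : ∀ t, p < t → t < m → height w p < height w t := fun t hpt htm =>
      not_le.1 fun h => Nat.find_min hdrop htm ⟨hpt, by omega, h⟩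
    have hpm' : p + 1 < m := lt_of_le_of_ne hpm fun h => by rw [← h] at hm; omega
    have := habove (m - 1) (by omega) (by omega)
    have := height_le_height_succ (w := w) (m - 1)
    rw [Nat.sub_add_cancel (by omega)] at this
    exact ⟨m - 1, by omega, by omega, by rw [Nat.sub_add_cancel (by omega)]; omega,
      fun t ht htm => habove t ht (by omega)⟩
  · push Not at hdrop
    exact Or.inr ⟨hpn, hdrop⟩

end Path

-- Position `p` of a word (counted from `0`) is the point `p + 1` of `[±n]`.
def IsBlock (w : Fin n → Bool) (x y : ℤ) : Prop :=
  (∃ p q : ℕ, IsArc w p q ∧ x = p + 1 ∧ y = q + 1) ∨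
  (∃ p q : ℕ, IsArc w p q ∧ x = -(q + 1) ∧ y = -(p + 1)) ∨
  (∃ p : ℕ, IsUnmatched w p ∧ x = -(p + 1) ∧ y = p + 1)

open Classical in
noncomputable def toMatching (w : Fin n → Bool) : Finset (Finset ℤ) :=
  ((Icc (-n : ℤ) n ×ˢ Icc (-n : ℤ) n).filter fun xy => IsBlock w xy.1 xy.2).image
    fun xy => {xy.1, xy.2}

section ToMatching

variable {w : Fin n → Bool} {x y x' y' : ℤ}

theorem IsBlock.lt (h : IsBlock w x y) : x < y := by
  rcases h with ⟨p, q, h, rfl, rfl⟩ | ⟨p, q, h, rfl, rfl⟩ | ⟨p, -, rfl, rfl⟩ <;>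
    grind [IsArc]

theorem IsBlock.mem_pmSet (h : IsBlock w x y) : x ∈ pmSet n ∧ y ∈ pmSet n := by
  simp only [mem_pmSet_iff]
  rcases h with ⟨p, q, h, rfl, rfl⟩ | ⟨p, q, h, rfl, rfl⟩ | ⟨p, h, rfl, rfl⟩ <;>
    grind [IsArc, IsUnmatched]

theorem IsBlock.neg (h : IsBlock w x y) : IsBlock w (-y) (-x) := by
  rcases h with ⟨p, q, h, rfl, rfl⟩ | ⟨p, q, h, rfl, rfl⟩ | ⟨p, h, rfl, rfl⟩
  · exact Or.inr (Or.inl ⟨p, q, h, rfl, rfl⟩)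
  · exact Or.inl ⟨p, q, h, by ring, by ring⟩
  · exact Or.inr (Or.inr ⟨p, h, rfl, by ring⟩)

theorem IsBlock.eq_of_share (h : IsBlock w x y) (h' : IsBlock w x' y')
    (hshare : x = x' ∨ x = y' ∨ y = x' ∨ y = y') : x = x' ∧ y = y' := by
  rcases h with ⟨p, q, h, rfl, rfl⟩ | ⟨p, q, h, rfl, rfl⟩ | ⟨p, h, rfl, rfl⟩ <;>
  rcases h' with ⟨p', q', h', rfl, rfl⟩ | ⟨p', q', h', rfl, rfl⟩ | ⟨p', h', rfl, rfl⟩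
  all_goals first
    | (have := h.eq_of_share h' (by omega); omega)
    | (have := h.ne_of_isUnmatched h'; omega)
    | (have := h'.ne_of_isUnmatched h; omega)
    | grind [IsArc]

theorem IsBlock.not_cross {i j k l : ℤ} (h : IsBlock w i k) (h' : IsBlock w j l) (hij : i < j)
    (hjk : j < k) (hkl : k < l) : False := by
  rcases h with ⟨p, q, h, rfl, rfl⟩ | ⟨p, q, h, rfl, rfl⟩ | ⟨p, h, rfl, rfl⟩ <;>
  rcases h' with ⟨p', q', h', rfl, rfl⟩ | ⟨p', q', h', rfl, rfl⟩ | ⟨p', h', rfl, rfl⟩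
  all_goals first
    | omega
    | exact h.not_cross h' (by omega) (by omega) (by omega)
    | exact h'.not_cross h (by omega) (by omega) (by omega)
    | exact h.not_cover h' (by omega) (by omega)
    | exact h'.not_cover h (by omega) (by omega)

theorem exists_isBlock (hw : IsBallot w) (hx : x ∈ pmSet n) :
    ∃ y, IsBlock w x y ∨ IsBlock w y x := by
  wlog hx0 : 0 < x generalizing x
  · rw [mem_pmSet_iff] at hx
    obtain ⟨y, hy⟩ := this (x := -x) (by rw [mem_pmSet_iff]; omega) (by omega)
    exact ⟨-y, by rcases hy with hy | hy <;> [right; left] <;> simpa using hy.neg⟩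
  obtain ⟨t, rfl⟩ : ∃ t : ℕ, x = t + 1 := ⟨(x - 1).toNat, by omega⟩
  have ht : t < n := by rw [mem_pmSet_iff] at hx; omega
  rcases step_eq_one_or (w := w) ht with hup | hdown
  · rcases exists_isArc_or_isUnmatched hup with ⟨q, hq⟩ | hu
    · exact ⟨q + 1, Or.inl (Or.inl ⟨t, q, hq, rfl, rfl⟩)⟩
    · exact ⟨-(t + 1), Or.inr (Or.inr (Or.inr ⟨t, hu, rfl, rfl⟩))⟩
  · obtain ⟨p, hp⟩ := exists_isArc_of_step_eq_neg_one hw hdown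
    exact ⟨p + 1, Or.inr (Or.inl ⟨p, t, hp, rfl, rfl⟩)⟩

theorem mem_toMatching {b : Finset ℤ} :
    b ∈ toMatching w ↔ ∃ x y, IsBlock w x y ∧ b = {x, y} := by
  classical
  simp only [toMatching, mem_image, mem_filter, mem_product, mem_Icc, Prod.exists]
  constructor
  · rintro ⟨x, y, ⟨-, h⟩, rfl⟩
    exact ⟨x, y, h, rfl⟩
  · rintro ⟨x, y, h, rfl⟩
    have := h.mem_pmSet
    simp only [mem_pmSet_iff] at this
    exact ⟨x, y, ⟨by omega, h⟩, rfl⟩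

theorem pair_eq_pair_of_lt {a b c d : ℤ} (hab : a < b) (hcd : c < d)
    (h : ({a, b} : Finset ℤ) = {c, d}) : a = c ∧ b = d := by
  have := congrArg (fun s : Finset ℤ => (s : Set ℤ)) h
  simp only [coe_pair, Set.pair_eq_pair_iff] at this
  omega

theorem isNCSP_toMatching (hw : IsBallot w) : IsNCSP n (toMatching w) := by
  refine ⟨?_, ?_, ?_, ?_, ?_⟩
  · simp only [mem_toMatching]
    rintro _ ⟨x, y, h, rfl⟩
    refine ⟨card_pair h.lt.ne, ?_⟩
    simpa [Set.insert_subset_iff] using h.mem_pmSet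
  · simp only [mem_toMatching]
    rintro _ ⟨x, y, h, rfl⟩ _ ⟨x', y', h', rfl⟩ hne
    refine disjoint_left.2 fun z hz hz' => hne ?_
    simp only [mem_insert, mem_singleton] at hz hz'
    obtain ⟨rfl, rfl⟩ := h.eq_of_share h' (by omega)
    rfl
  · intro x hx
    obtain ⟨y, h | h⟩ := exists_isBlock hw hx
    · exact ⟨_, mem_toMatching.2 ⟨x, y, h, rfl⟩, by simp⟩
    · exact ⟨_, mem_toMatching.2 ⟨y, x, h, rfl⟩, by simp⟩
  · simp only [mem_toMatching]
    rintro _ ⟨x, y, h, rfl⟩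
    exact ⟨-y, -x, h.neg, by simp [image_insert, pair_comm]⟩
  · intro i j k l hik hjl hij hjk hkl
    obtain ⟨x, y, h, hb⟩ := mem_toMatching.1 hik
    obtain ⟨x', y', h', hb'⟩ := mem_toMatching.1 hjl
    obtain ⟨rfl, rfl⟩ := pair_eq_pair_of_lt (by omega) h.lt hb
    obtain ⟨rfl, rfl⟩ := pair_eq_pair_of_lt (by omega) h'.lt hb'
    exact h.not_cross h' hij hjk hkl

end ToMatching

section Partner

variable {M M' : Finset (Finset ℤ)} {a b c v x y : ℤ}

theorem _root_.IsNCSP.eq_of_mem (hM : IsNCSP n M) {B B' : Finset ℤ} (hB : B ∈ M)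
    (hB' : B' ∈ M) (hx : x ∈ B) (hx' : x ∈ B') : B = B' :=
  by_contra fun hne => disjoint_left.1 (hM.2.1 B hB B' hB' hne) hx hx'

theorem _root_.IsNCSP.neg_pair_mem (hM : IsNCSP n M) (h : {x, y} ∈ M) : {-x, -y} ∈ M := by
  simpa [image_insert] using hM.2.2.2.1 _ h

theorem _root_.IsNCSP.mem_pmSet (hM : IsNCSP n M) (h : {x, y} ∈ M) :
    x ∈ pmSet n ∧ y ∈ pmSet n := by
  have := (hM.1 _ h).2
  simp only [coe_pair, Set.insert_subset_iff, Set.singleton_subset_iff] at this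
  exact this

theorem _root_.IsNCSP.eq_of_subset (hM : IsNCSP n M) (hM' : IsNCSP n M') (h : M ⊆ M') :
    M = M' := by
  refine Subset.antisymm h fun B' hB' => ?_
  obtain ⟨x, hx⟩ := card_pos.1 (by rw [(hM'.1 B' hB').1]; omega)
  obtain ⟨B, hB, hxB⟩ := hM.2.2.1 x ((hM'.1 B' hB').2 hx)
  rwa [hM'.eq_of_mem hB' (h hB) hx hxB]

open Classical in
noncomputable def partner (M : Finset (Finset ℤ)) (x : ℤ) : ℤ :=
  if h : ∃ y, y ≠ x ∧ {x, y} ∈ M then h.choose else 0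

theorem partner_eq (hM : IsNCSP n M) (hxy : y ≠ x) (h : {x, y} ∈ M) : partner M x = y := by
  have hex : ∃ y, y ≠ x ∧ {x, y} ∈ M := ⟨y, hxy, h⟩
  obtain ⟨hne, hmem⟩ := hex.choose_spec
  rw [partner, dif_pos hex]
  have := hM.eq_of_mem hmem h (x := x) (by simp) (by simp)
  have hy : hex.choose ∈ ({x, y} : Finset ℤ) := this ▸ by simp
  simp only [mem_insert, mem_singleton] at hy
  tauto

theorem partner_spec (hM : IsNCSP n M) (hx : x ∈ pmSet n) :
    partner M x ≠ x ∧ {x, partner M x} ∈ M := by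
  obtain ⟨B, hB, hxB⟩ := hM.2.2.1 x hx
  obtain ⟨u, v, huv, rfl⟩ := card_eq_two.1 (hM.1 B hB).1
  simp only [mem_insert, mem_singleton] at hxB
  rcases hxB with rfl | rfl
  · rw [partner_eq hM huv.symm hB]; exact ⟨huv.symm, hB⟩
  · rw [pair_comm] at hB; rw [partner_eq hM huv hB]; exact ⟨huv, hB⟩

theorem partner_mem_pmSet (hM : IsNCSP n M) (hx : x ∈ pmSet n) : partner M x ∈ pmSet n :=
  (hM.mem_pmSet (partner_spec hM hx).2).2

theorem partner_partner (hM : IsNCSP n M) (hx : x ∈ pmSet n) : partner M (partner M x) = x := by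
  obtain ⟨hne, hmem⟩ := partner_spec hM hx
  exact partner_eq hM hne.symm (pair_comm x _ ▸ hmem)

/-- A block meeting both signs must be `{-x, x}`, since `{x, a}` and `{-x, -a}` would cross. -/
theorem partner_eq_neg_of_neg (hM : IsNCSP n M) (hx : x ∈ pmSet n) (hx0 : 0 < x)
    (hneg : partner M x < 0) : partner M x = -x := by
  obtain ⟨-, hmem⟩ := partner_spec hM hx
  have hmem' := hM.neg_pair_mem hmem
  rw [pair_comm] at hmem
  by_contra hne
  rcases lt_or_gt_of_ne (show -partner M x ≠ x by omega) with hlt | hgt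
  · exact hM.2.2.2.2 (-x) (partner M x) (-partner M x) x hmem' hmem (by omega) (by omega) hlt
  · exact hM.2.2.2.2 (partner M x) (-x) x (-partner M x) hmem hmem' (by omega) (by omega) hgt

theorem partner_mem_Ioo_of_nested (hM : IsNCSP n M) (hab : {a, b} ∈ M) (ha : 0 < a)
    (hav : a < v) (hvb : v < b) : a < partner M v ∧ partner M v < b := by
  have hv : v ∈ pmSet n := by
    have := (hM.mem_pmSet hab).2; rw [mem_pmSet_iff] at this ⊢; omega
  obtain ⟨hne, hmem⟩ := partner_spec hM hv
  have hshare : partner M v ≠ a ∧ partner M v ≠ b := by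
    constructor <;> intro heq <;>
    · have := hM.eq_of_mem hmem hab (x := partner M v) (by simp) (by simp [heq])
      have : v ∈ ({a, b} : Finset ℤ) := this ▸ by simp
      simp only [mem_insert, mem_singleton] at this; omega
  have hpos : 0 < partner M v := by
    by_contra! hle
    have := partner_eq_neg_of_neg hM hv (by omega)
      (lt_of_le_of_ne hle (partner_mem_pmSet hM hv).1)
    rw [this, pair_comm] at hmem
    exact hM.2.2.2.2 (-v) a v b hmem hab (by omega) hav hvb
  refine ⟨lt_of_not_ge fun hle => ?_, lt_of_not_ge fun hle => ?_⟩
  · rw [pair_comm] at hmem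
    exact hM.2.2.2.2 _ a v b hmem hab (by omega) hav hvb
  · exact hM.2.2.2.2 a v b _ hab hmem hav hvb (by omega)

theorem lt_partner_of_centered (hM : IsNCSP n M) (hc : {-c, c} ∈ M) (hc0 : 0 < c)
    (hv : v ∈ pmSet n) (hcv : c < v) (hpos : 0 < partner M v) : c < partner M v := by
  obtain ⟨-, hmem⟩ := partner_spec hM hv
  have hne : partner M v ≠ c := fun heq => by
    have := hM.eq_of_mem hmem hc (x := c) (by simp [heq]) (by simp)
    have : v ∈ ({-c, c} : Finset ℤ) := this ▸ by simp
    simp only [mem_insert, mem_singleton] at this; omega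
  refine lt_of_not_ge fun hle => ?_
  rw [pair_comm] at hmem
  exact hM.2.2.2.2 (-c) _ c v hc hmem (by omega) (by omega) hcv

end Partner

noncomputable def toWord (n : ℕ) (M : Finset (Finset ℤ)) : Fin n → Bool := fun t =>
  decide ¬(0 < partner M ((t : ℕ) + 1) ∧ partner M ((t : ℕ) + 1) < (t : ℕ) + 1)

noncomputable def partnerIdx (M : Finset (Finset ℤ)) (s : ℕ) : ℕ :=
  (partner M (s + 1)).toNat - 1

section ToWord

variable {M : Finset (Finset ℤ)} {p q s : ℕ} {lo hi : ℕ}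

theorem mem_pmSet_of_lt (hs : s < n) : (s : ℤ) + 1 ∈ pmSet n := by
  rw [mem_pmSet_iff]; omega

theorem step_toWord_eq_neg_one_iff (hs : s < n) :
    step (toWord n M) s = -1 ↔ 0 < partner M (s + 1) ∧ partner M (s + 1) < s + 1 := by
  by_cases h : 0 < partner M (s + 1) ∧ partner M (s + 1) < s + 1 <;> simp [step, toWord, hs, h]

theorem step_toWord_eq_one_iff (hs : s < n) :
    step (toWord n M) s = 1 ↔ ¬(0 < partner M (s + 1) ∧ partner M (s + 1) < s + 1) := by
  by_cases h : 0 < partner M (s + 1) ∧ partner M (s + 1) < s + 1 <;> simp [step, toWord, hs, h]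

theorem partnerIdx_add_one (h : 0 < partner M (s + 1)) :
    (partnerIdx M s : ℤ) + 1 = partner M (s + 1) := by
  rw [partnerIdx]; omega

theorem partner_partnerIdx (hM : IsNCSP n M) (hs : s < n) (h : 0 < partner M (s + 1)) :
    partner M (partnerIdx M s + 1) = s + 1 := by
  rw [partnerIdx_add_one h, partner_partner hM (mem_pmSet_of_lt hs)]

theorem partnerIdx_injOn (hM : IsNCSP n M) :
    Set.InjOn (partnerIdx M) {s | s < n ∧ 0 < partner M (s + 1)} := fun s hs s' hs' h => by
  have := partner_partnerIdx hM hs.1 hs.2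
  rw [h, partner_partnerIdx hM hs'.1 hs'.2] at this
  omega

theorem height_toWord_le_height_of_closers (hM : IsNCSP n M) (hlo : lo ≤ hi) (hhi : hi ≤ n)
    (H : ∀ s, lo ≤ s → s < hi → step (toWord n M) s = -1 →
      (lo : ℤ) < partner M (s + 1)) :
    height (toWord n M) lo ≤ height (toWord n M) hi := by
  suffices #{s ∈ Ico lo hi | step (toWord n M) s = -1} ≤
      #{s ∈ Ico lo hi | step (toWord n M) s = 1} by
    have := height_sub_height (w := toWord n M) hlo hhi; omega
  refine card_le_card_of_injOn (partnerIdx M) (fun s hs => ?_) fun s hs s' hs' h => ?_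
  · simp only [coe_filter, mem_Ico, Set.mem_ofPred_eq] at hs ⊢
    obtain ⟨⟨hlos, hshi⟩, hdown⟩ := hs
    have hp := (step_toWord_eq_neg_one_iff (by omega)).1 hdown
    have := H s hlos hshi hdown
    have := partnerIdx_add_one hp.1
    refine ⟨⟨by omega, by omega⟩, (step_toWord_eq_one_iff (by omega)).2 ?_⟩
    rw [partner_partnerIdx hM (by omega) hp.1]; omega
  · simp only [coe_filter, mem_Ico, Set.mem_ofPred_eq] at hs hs'
    exact partnerIdx_injOn hM ⟨by omega, ((step_toWord_eq_neg_one_iff (by omega)).1 hs.2).1⟩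
      ⟨by omega, ((step_toWord_eq_neg_one_iff (by omega)).1 hs'.2).1⟩ h

theorem height_toWord_le_height_of_openers (hM : IsNCSP n M) (hlo : lo ≤ hi) (hhi : hi ≤ n)
    (H : ∀ s, lo ≤ s → s < hi → step (toWord n M) s = 1 →
      0 < partner M (s + 1) ∧ partner M (s + 1) ≤ hi) :
    height (toWord n M) hi ≤ height (toWord n M) lo := by
  suffices #{s ∈ Ico lo hi | step (toWord n M) s = 1} ≤
      #{s ∈ Ico lo hi | step (toWord n M) s = -1} by
    have := height_sub_height (w := toWord n M) hlo hhi; omega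
  refine card_le_card_of_injOn (partnerIdx M) (fun s hs => ?_) fun s hs s' hs' h => ?_
  · simp only [coe_filter, mem_Ico, Set.mem_ofPred_eq] at hs ⊢
    obtain ⟨⟨hlos, hshi⟩, hup⟩ := hs
    have hp := (step_toWord_eq_one_iff (by omega)).1 hup
    have := H s hlos hshi hup
    have := partnerIdx_add_one this.1
    have := (partner_spec hM (mem_pmSet_of_lt (by omega : s < n))).1
    refine ⟨⟨by omega, by omega⟩, (step_toWord_eq_neg_one_iff (by omega)).2 ?_⟩
    rw [partner_partnerIdx hM (by omega) (by omega)]; omega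
  · simp only [coe_filter, mem_Ico, Set.mem_ofPred_eq] at hs hs'
    exact partnerIdx_injOn hM ⟨by omega, (H s hs.1.1 hs.1.2 hs.2).1⟩
      ⟨by omega, (H s' hs'.1.1 hs'.1.2 hs'.2).1⟩ h

theorem isBallot_toWord (hM : IsNCSP n M) : IsBallot (toWord n M) := by
  intro t
  wlog ht : t ≤ n generalizing t
  · rw [height_of_le (by omega)]; exact this n le_rfl
  simpa using height_toWord_le_height_of_closers hM (Nat.zero_le t) ht fun s _ hst hdown =>
    ((step_toWord_eq_neg_one_iff (by omega)).1 hdown).1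

theorem isArc_toWord (hM : IsNCSP n M) (h : {(p : ℤ) + 1, (q : ℤ) + 1} ∈ M) (hpq : p < q) :
    IsArc (toWord n M) p q := by
  have hq : q < n := by
    have := (hM.mem_pmSet h).2; rw [mem_pmSet_iff] at this; omega
  have hpart : partner M (p + 1) = q + 1 := partner_eq hM (by omega) h
  have hpart' : partner M (q + 1) = p + 1 :=
    partner_eq hM (by omega) (pair_comm ((p : ℤ) + 1) _ ▸ h)
  have hnest : ∀ s, p < s → s < q → p + 1 < partner M (s + 1) ∧ partner M (s + 1) < q + 1 :=
    fun s hps hsq => by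
      have := partner_mem_Ioo_of_nested hM h (by omega) (v := s + 1) (by omega) (by omega)
      omega
  set w := toWord n M
  have hrise : height w (p + 1) = height w p + 1 := by
    rw [height_succ, (step_toWord_eq_one_iff (by omega)).2 (by omega)]
  have hfall : height w (q + 1) = height w q - 1 := by
    rw [height_succ, (step_toWord_eq_neg_one_iff hq).2 (by omega), Int.add_neg_one]
  have hinside : ∀ t, p < t → t ≤ q → height w (p + 1) ≤ height w t :=
    fun t hpt htq => height_toWord_le_height_of_closers hM (by omega) (by omega)
      fun s hs hst _ => by have := hnest s (by omega) (by omega); push_cast; omega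
  have hback : height w q ≤ height w (p + 1) :=
    height_toWord_le_height_of_openers hM (by omega) (by omega) fun s hs hsq _ => by
      have := hnest s (by omega) hsq; omega
  have := hinside q hpq le_rfl
  exact ⟨hpq, hq, by omega, fun t hpt htq => by have := hinside t hpt htq; omega⟩

theorem isUnmatched_toWord (hM : IsNCSP n M) (h : {-((p : ℤ) + 1), (p : ℤ) + 1} ∈ M) :
    IsUnmatched (toWord n M) p := by
  have hp : p < n := by
    have := (hM.mem_pmSet h).2; rw [mem_pmSet_iff] at this; omega
  have hpart : partner M (p + 1) = -(p + 1) :=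
    partner_eq hM (by omega) (pair_comm (-((p : ℤ) + 1)) _ ▸ h)
  have hrise : height (toWord n M) (p + 1) = height (toWord n M) p + 1 := by
    rw [height_succ, (step_toWord_eq_one_iff hp).2 (by omega)]
  refine ⟨hp, fun t hpt htn => ?_⟩
  have := height_toWord_le_height_of_closers hM (lo := p + 1) (hi := t) (by omega) htn
    fun s hs hst hdown => by
      have hd := (step_toWord_eq_neg_one_iff (by omega)).1 hdown
      have := lt_partner_of_centered hM h (by omega) (mem_pmSet_of_lt (by omega : s < n))
        (by omega) hd.1
      push_cast at this ⊢; omega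
  omega

theorem isBlock_toWord (hM : IsNCSP n M) {x y : ℤ} (h : {x, y} ∈ M) (hxy : x < y) :
    IsBlock (toWord n M) x y := by
  obtain ⟨hx, hy⟩ := hM.mem_pmSet h
  rcases lt_or_gt_of_ne hx.1 with hx0 | hx0
  · rcases lt_or_gt_of_ne hy.1 with hy0 | hy0
    · obtain ⟨p, rfl⟩ : ∃ p : ℕ, y = -((p : ℤ) + 1) := ⟨(-y - 1).toNat, by omega⟩
      obtain ⟨q, rfl⟩ : ∃ q : ℕ, x = -((q : ℤ) + 1) := ⟨(-x - 1).toNat, by omega⟩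
      have h' := hM.neg_pair_mem h
      simp only [neg_neg] at h'
      exact Or.inr (Or.inl
        ⟨p, q, isArc_toWord hM (pair_comm (q + 1 : ℤ) _ ▸ h') (by omega), rfl, rfl⟩)
    · obtain ⟨p, rfl⟩ : ∃ p : ℕ, y = (p : ℤ) + 1 := ⟨(y - 1).toNat, by omega⟩
      have hpart : partner M (p + 1) = x := partner_eq hM (by omega) (pair_comm x _ ▸ h)
      have := partner_eq_neg_of_neg hM hy hy0 (by omega)
      obtain rfl : x = -((p : ℤ) + 1) := by omega
      exact Or.inr (Or.inr ⟨p, isUnmatched_toWord hM h, rfl, rfl⟩)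
  · obtain ⟨p, rfl⟩ : ∃ p : ℕ, x = (p : ℤ) + 1 := ⟨(x - 1).toNat, by omega⟩
    obtain ⟨q, rfl⟩ : ∃ q : ℕ, y = (q : ℤ) + 1 := ⟨(y - 1).toNat, by omega⟩
    exact Or.inl ⟨p, q, isArc_toWord hM h (by omega), rfl, rfl⟩

theorem toMatching_toWord (hM : IsNCSP n M) : toMatching (toWord n M) = M := by
  refine (hM.eq_of_subset (isNCSP_toMatching (isBallot_toWord hM)) fun B hB => ?_).symm
  obtain ⟨x, y, hxy, rfl⟩ := card_eq_two.1 (hM.1 B hB).1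
  rcases lt_or_gt_of_ne hxy with hlt | hgt
  · exact mem_toMatching.2 ⟨x, y, isBlock_toWord hM hB hlt, rfl⟩
  · rw [pair_comm] at hB ⊢
    exact mem_toMatching.2 ⟨y, x, isBlock_toWord hM hB hgt, rfl⟩

end ToWord

theorem toWord_toMatching {w : Fin n → Bool} (hw : IsBallot w) : toWord n (toMatching w) = w := by
  have hM := isNCSP_toMatching hw
  funext t
  have hdown : step w t = -1 ↔
      0 < partner (toMatching w) (t + 1) ∧ partner (toMatching w) (t + 1) < t + 1 := by
    constructor
    · intro hd
      obtain ⟨p, hp⟩ := exists_isArc_of_step_eq_neg_one hw hd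
      have hmem : {((t : ℕ) : ℤ) + 1, (p : ℤ) + 1} ∈ toMatching w :=
        mem_toMatching.2 ⟨p + 1, t + 1, Or.inl ⟨p, t, hp, rfl, rfl⟩, pair_comm _ _⟩
      rw [partner_eq hM (by have := hp.1; omega) hmem]
      have := hp.1; omega
    · rintro ⟨hpos, hlt⟩
      obtain ⟨x, y, hb, he⟩ := mem_toMatching.1 (partner_spec hM (mem_pmSet_of_lt t.2)).2
      obtain ⟨rfl, rfl⟩ := pair_eq_pair_of_lt hlt hb.lt ((pair_comm _ _).trans he)
      rcases hb with ⟨p, q, hpq, -, hq⟩ | ⟨p, q, -, -, hq⟩ | ⟨p, -, hp, -⟩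
      · obtain rfl : q = t := by omega
        exact hpq.step_right
      · omega
      · omega
  have hstep : step w t = if w t then 1 else -1 := by simp [step]
  change (decide ¬(0 < partner (toMatching w) ((t : ℕ) + 1) ∧
    partner (toMatching w) ((t : ℕ) + 1) < (t : ℕ) + 1)) = w t
  simp only [← hdown, hstep]
  cases w t <;> simp

section Counting

theorem card_filter_snoc {P : (Fin (n + 1) → Bool) → Prop} [DecidablePred P] :
    #{w | P w} = #{v : Fin n → Bool | P (Fin.snoc v true)} +
      #{v : Fin n → Bool | P (Fin.snoc v false)} := by
  simp only [card_filter]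
  rw [← (Fin.snocEquiv fun _ => Bool).sum_comp, Fintype.sum_prod_type, Fintype.sum_bool]
  rfl

variable {v : Fin n → Bool} {b : Bool} {s t : ℕ}

theorem step_snoc_of_lt (hs : s < n) :
    step (Fin.snoc v b : Fin (n + 1) → Bool) s = step v s := by
  simp only [step, hs, Nat.lt_succ_of_lt hs, dif_pos]
  rw [show (⟨s, _⟩ : Fin (n + 1)) = Fin.castSucc ⟨s, hs⟩ from rfl, Fin.snoc_castSucc]

theorem height_snoc_of_le (ht : t ≤ n) :
    height (Fin.snoc v b : Fin (n + 1) → Bool) t = height v t :=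
  sum_congr rfl fun s hs => step_snoc_of_lt (by simp at hs; omega)

theorem height_snoc_succ :
    height (Fin.snoc v b : Fin (n + 1) → Bool) (n + 1) = height v n + if b then 1 else -1 := by
  rw [height_succ, height_snoc_of_le le_rfl]
  simp only [step, Nat.lt_succ_self, dif_pos]
  rw [show (⟨n, _⟩ : Fin (n + 1)) = Fin.last n from rfl, Fin.snoc_last]

theorem isBallot_snoc_iff :
    IsBallot (Fin.snoc v b : Fin (n + 1) → Bool) ↔
      IsBallot v ∧ 0 ≤ height v n + if b then 1 else -1 := by
  rw [← height_snoc_succ]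
  refine ⟨fun h => ⟨fun t => ?_, h _⟩, fun ⟨h, hlast⟩ t => ?_⟩
  · rcases le_total t n with ht | ht
    · rw [← height_snoc_of_le ht]; exact h t
    · rw [height_of_le ht, ← height_snoc_of_le le_rfl]; exact h n
  · rcases le_or_gt t n with ht | ht
    · rw [height_snoc_of_le ht]; exact h t
    · rw [height_of_le (show n + 1 ≤ t by omega)]; exact hlast

open Classical in
noncomputable def ballotCount (n h : ℕ) : ℕ :=
  #{w : Fin n → Bool | IsBallot w ∧ (h : ℤ) ≤ height w n}

theorem ballotCount_zero_zero : ballotCount 0 0 = 1 := by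
  rw [ballotCount, card_eq_one]
  refine ⟨Fin.elim0, eq_singleton_iff_unique_mem.2 ⟨?_, fun w _ => funext fun i => i.elim0⟩⟩
  simp only [mem_filter, mem_univ, true_and]
  refine ⟨fun t => ?_, by simp⟩
  rw [height_of_le (Nat.zero_le t)]; simp

theorem ballotCount_of_lt {h : ℕ} (hn : n < h) : ballotCount n h = 0 := by
  simp only [ballotCount, card_eq_zero, filter_eq_empty_iff, not_and, not_le]
  exact fun w _ _ => by have := height_le (w := w) n; omega

theorem ballotCount_succ (n h : ℕ) :
    ballotCount (n + 1) h = ballotCount n (h - 1) + ballotCount n (h + 1) := by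
  classical
  simp only [ballotCount]
  rw [card_filter_snoc]
  congr 1 <;> congr 1 <;> ext v <;>
    simp only [mem_filter, mem_univ, true_and, isBallot_snoc_iff, height_snoc_succ, if_true,
      Bool.false_eq_true, if_false]
  · have := height_le (w := v) n
    constructor
    · rintro ⟨⟨hv, -⟩, hh⟩; exact ⟨hv, by have := hv n; omega⟩
    · rintro ⟨hv, hh⟩; exact ⟨⟨hv, by have := hv n; omega⟩, by omega⟩
  · constructor
    · rintro ⟨⟨hv, -⟩, hh⟩; exact ⟨hv, by omega⟩
    · rintro ⟨hv, hh⟩; exact ⟨⟨hv, by omega⟩, by omega⟩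

theorem choose_div_two_eq_choose_succ_div_two (n : ℕ) :
    n.choose (n / 2) = n.choose ((n + 1) / 2) := by
  rcases Nat.even_or_odd' n with ⟨j, rfl | rfl⟩
  · congr 1; omega
  · rw [show (2 * j + 1) / 2 = j by omega, show (2 * j + 1 + 1) / 2 = j + 1 by omega,
      Nat.choose_symm_half]

theorem ballotCount_eq_choose {h : ℕ} (hh : h ≤ n) :
    ballotCount n h = n.choose ((n - h) / 2) := by
  induction n generalizing h with
  | zero =>
    obtain rfl : h = 0 := by omega
    exact ballotCount_zero_zero
  | succ n ih =>
    have hprev : ballotCount n (h - 1) = n.choose ((n + 1 - h) / 2) := by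
      rcases Nat.eq_zero_or_pos h with rfl | hpos
      · rw [ih (Nat.zero_le n), Nat.sub_zero, choose_div_two_eq_choose_succ_div_two]; rfl
      · rw [ih (by omega)]; congr 2; omega
    rw [ballotCount_succ, hprev]
    rcases lt_or_ge h n with hlt | hge
    · obtain ⟨m, hm⟩ : ∃ m, (n + 1 - h) / 2 = m + 1 := ⟨(n + 1 - h) / 2 - 1, by omega⟩
      rw [ih hlt, show (n - (h + 1)) / 2 = m by omega, hm, Nat.choose_succ_succ', add_comm]
    · rw [ballotCount_of_lt (by omega), show (n + 1 - h) / 2 = 0 by omega]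
      simp

theorem ncard_isBallot (n : ℕ) : {w : Fin n → Bool | IsBallot w}.ncard = n.choose (n / 2) := by
  classical
  have := ballotCount_eq_choose (Nat.zero_le n)
  rw [Nat.sub_zero, ballotCount] at this
  rw [← this, ← Set.ncard_coe_finset]
  congr 1; ext w
  simpa using fun hw : IsBallot w => hw n

end Counting

end SymmetricNoncrossing

open SymmetricNoncrossing in
/-- The number of symmetric noncrossing perfect matchings on `[±n]`
equals the central binomial coefficient `C(n, ⌊n/2⌋)`. -/
theorem stmt_11 (n : ℕ) :
    {M : Finset (Finset ℤ) | IsNCSP n M}.ncard = Nat.choose n (n / 2) := by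
  have hbij : Set.BijOn toMatching {w : Fin n → Bool | IsBallot w} {M | IsNCSP n M} :=
    Set.InvOn.bijOn ⟨fun w hw => toWord_toMatching hw, fun M hM => toMatching_toWord hM⟩
      (fun w hw => isNCSP_toMatching hw) (fun M hM => isBallot_toWord hM)
  rw [← hbij.image_eq, hbij.injOn.ncard_image, ncard_isBallot]
end

section
/- For 0 ≤ k ≤ ⌊n/2⌋, the number of dispersed Dyck-type paths in D_{n,k} equals C(n,k). Here D_{n,k} is the set of n-step lattice paths (p_0,...,p_n) in ℕ² starting at (0,0), using steps (1,1), (1,−1), (1,0), staying in the nonnegative quadrant, using the step (1,0) only at height 0 (i.e., only when the resulting point is on the x-axis), ending at a point (n, 2m) for some m ∈ ℕ, and using exactly n − 2k horizontal steps. -/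
/-- A dispersed-Dyck-type path in `D_{n,k}`: an `n`-step lattice path `p₀, …, p_n` in
`ℕ²` starting at `(0,0)`, with steps `(1,1)`, `(1,-1)`, `(1,0)`, where horizontal
steps `(1,0)` occur only at height `0`, the final height is even, and exactly
`n - 2k` steps are horizontal. -/
def IsDispersedPath (n k : ℕ) (p : Fin (n + 1) → ℕ × ℕ) : Prop :=
  p 0 = (0, 0) ∧
  (∀ i : Fin n, (p i.succ).1 = (p i.castSucc).1 + 1 ∧
    ((p i.succ).2 = (p i.castSucc).2 + 1 ∨
     (p i.succ).2 + 1 = (p i.castSucc).2 ∨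
     ((p i.succ).2 = (p i.castSucc).2 ∧ (p i.succ).2 = 0))) ∧
  (∃ m : ℕ, (p (Fin.last n)).2 = 2 * m) ∧
  {i : Fin n | (p i.succ).2 = (p i.castSucc).2}.ncard = n - 2 * k


def Nf (n t : ℕ) : ℕ := if t ≤ n then Nat.choose n ((n - t)/2) else 0

def Bf (n h : ℕ) : ℕ := ∑ t ∈ Finset.range (h+1), Nf n t

def Qf (n j h : ℕ) : ℕ :=
  if j < n then (if h ≤ j then Nat.choose n ((j-h)/2) else 0)
  else if j = n then Bf n h else 0

lemma Nf_of_le {n t : ℕ} (h : t ≤ n) : Nf n t = Nat.choose n ((n-t)/2) := if_pos h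
lemma Nf_of_gt {n t : ℕ} (h : n < t) : Nf n t = 0 := if_neg (by omega)

lemma choose_mid (n : ℕ) : Nat.choose n ((n+1)/2) = Nat.choose n (n/2) := by
  rcases Nat.even_or_odd n with ⟨s, hs⟩ | ⟨s, hs⟩
  · have : (n+1)/2 = n/2 := by omega
    rw [this]
  · have h1 : (n+1)/2 = s+1 := by omega
    have h2 : n/2 = s := by omega
    rw [h1, h2]
    have := Nat.choose_symm (n := n) (k := s) (by omega)
    have hns : n - s = s + 1 := by omega
    rw [hns] at this
    exact this

lemma pascal_div2 (n d : ℕ) (hd : 2 ≤ d) :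
    Nat.choose (n+1) (d/2) = Nat.choose n ((d-2)/2) + Nat.choose n (d/2) := by
  obtain ⟨s, hs⟩ : ∃ s, d/2 = s + 1 := ⟨d/2 - 1, by omega⟩
  have h2 : (d-2)/2 = s := by omega
  rw [hs, h2, Nat.choose_succ_succ]

lemma Nf_rec (n t : ℕ) :
    Nf (n+1) t = Nf n (t+1) + (if t = 0 then Nf n 0 else Nf n (t-1)) := by
  rcases Nat.lt_trichotomy t (n+1) with ht | ht | ht
  · have ht' : t ≤ n := by omega
    rcases eq_or_ne t 0 with rfl | ht0
    · rw [if_pos rfl, Nf_of_le (by omega), Nf_of_le (Nat.zero_le n)]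
      rcases eq_or_ne n 0 with rfl | hn
      · simp [Nf]
      · rw [Nf_of_le (by omega : 0 + 1 ≤ n)]
        have e1 := pascal_div2 n (n+1) (by omega)
        rw [choose_mid] at e1
        rw [(show (n+1-2)/2 = (n-(0+1))/2 by omega)] at e1
        simpa using e1
    · rw [if_neg ht0, Nf_of_le (by omega : t ≤ n+1), Nf_of_le (by omega : t - 1 ≤ n)]
      rcases eq_or_ne t n with htn | htn
      · rw [Nf_of_gt (by omega : n < t + 1)]
        rw [(show (n+1-t)/2 = 0 by omega), (show (n-(t-1))/2 = 0 by omega)]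
        simp
      · rw [Nf_of_le (by omega : t + 1 ≤ n)]
        rw [(show (n+1-t)/2 = (n-(t-1))/2 by omega)]
        have e1 := pascal_div2 n (n - (t-1)) (by omega)
        rw [(show ((n-(t-1))-2)/2 = (n-(t+1))/2 by omega)] at e1
        exact e1
  · subst ht
    rw [Nf_of_le (le_refl (n+1)), Nf_of_gt (by omega), if_neg (by omega : n+1 ≠ 0),
      Nf_of_le (by omega : n+1-1 ≤ n)]
    rw [(show (n+1-(n+1))/2 = 0 by omega), (show (n-(n+1-1))/2 = 0 by omega)]
    simp
  · rw [Nf_of_gt (by omega), Nf_of_gt (by omega), if_neg (by omega : t ≠ 0),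
      Nf_of_gt (by omega : n < t - 1)]

lemma Bf_zero (h : ℕ) : Bf 0 h = 1 := by
  induction h with
  | zero => simp [Bf, Nf]
  | succ h ih =>
    unfold Bf at *
    rw [Finset.sum_range_succ, ih, Nf_of_gt (by omega)]

lemma Bf_rec (n h : ℕ) : Bf (n+1) h = Bf n (h+1) + (if h = 0 then 0 else Bf n (h-1)) := by
  rcases eq_or_ne h 0 with rfl | hh
  · rw [if_pos rfl, add_zero]
    unfold Bf
    rw [Finset.sum_range_one, Nf_rec, if_pos rfl, Finset.sum_range_succ, Finset.sum_range_one]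
    simp only [zero_add]
    omega
  · rw [if_neg hh]
    obtain ⟨h', rfl⟩ : ∃ h', h = h' + 1 := ⟨h - 1, by omega⟩
    have key : ∀ t ∈ Finset.range (h'+1+1), Nf (n+1) t
        = Nf n (t+1) + (if t = 0 then Nf n 0 else Nf n (t-1)) := fun t _ => Nf_rec n t
    unfold Bf
    rw [Finset.sum_congr rfl key, Finset.sum_add_distrib]
    have A : ∑ t ∈ Finset.range (h'+1+1), Nf n (t+1) + Nf n 0
        = ∑ t ∈ Finset.range (h'+1+1+1), Nf n t := by
      rw [Finset.sum_range_succ' (fun t => Nf n t) (h'+1+1)]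
    have B : ∑ t ∈ Finset.range (h'+1+1), (if t = 0 then Nf n 0 else Nf n (t-1))
        = Nf n 0 + ∑ t ∈ Finset.range (h'+1), Nf n t := by
      rw [Finset.sum_range_succ' (fun t => if t = 0 then Nf n 0 else Nf n (t-1)) (h'+1)]
      simp
      omega
    have hs : h' + 1 - 1 = h' := by omega
    rw [B, hs]
    omega

lemma Qf_lt {n j h : ℕ} (hj : j < n) (hh : h ≤ j) : Qf n j h = Nat.choose n ((j-h)/2) := by
  rw [Qf, if_pos hj, if_pos hh]
lemma Qf_lt' {n j h : ℕ} (hj : j < n) (hh : j < h) : Qf n j h = 0 := by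
  rw [Qf, if_pos hj, if_neg (by omega)]
lemma Qf_diag {n h : ℕ} : Qf n n h = Bf n h := by
  rw [Qf, if_neg (by omega), if_pos rfl]
lemma Qf_gt {n j h : ℕ} (hj : n < j) : Qf n j h = 0 := by
  rw [Qf, if_neg (by omega), if_neg (by omega)]

lemma Bf_zero_eq (n : ℕ) : Bf n 0 = Nat.choose n (n/2) := by
  rw [Bf, Finset.sum_range_one, Nf_of_le (Nat.zero_le n), Nat.sub_zero]

lemma Qf_rec (n j h : ℕ) :
    Qf (n+1) j h = (if 1 ≤ j then Qf n (j-1) (h+1) else 0)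
      + (if 1 ≤ j ∧ 1 ≤ h then Qf n (j-1) (h-1) else 0)
      + (if h = 0 then Qf n j 0 else 0) := by
  rcases eq_or_ne j 0 with rfl | hj0
  · simp only [if_neg (by omega : ¬ (1:ℕ) ≤ 0), if_neg (by omega : ¬ ((1:ℕ) ≤ 0 ∧ 1 ≤ h)),
      zero_add]
    rcases eq_or_ne h 0 with rfl | hh
    · rw [if_pos rfl]
      rcases eq_or_ne n 0 with rfl | hn
      · rw [Qf_lt (by omega) (by omega), Qf_diag, Bf_zero 0]
        simp
      · rw [Qf_lt (by omega) (by omega), Qf_lt (by omega) (by omega)]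
        simp
    · rw [if_neg hh, Qf_lt' (by omega) (by omega)]
  · -- j ≥ 1
    rw [if_pos (by omega : 1 ≤ j)]
    rcases Nat.lt_trichotomy j (n+1) with hjn | hjn | hjn
    · -- j ≤ n
      rcases eq_or_ne h 0 with rfl | hh
      · -- h = 0
        rw [if_neg (by omega : ¬ ((1:ℕ) ≤ j ∧ 1 ≤ 0)), if_pos rfl, add_zero]
        rcases eq_or_ne j 1 with rfl | hj1
        · rw [Qf_lt (by omega) (by omega)]
          rcases eq_or_ne n 1 with rfl | hn1
          · rw [Qf_lt' (by omega) (by omega), Qf_diag, Bf_zero_eq]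
            simp
          · rw [Qf_lt' (by omega) (by omega), Qf_lt (by omega) (by omega)]
            simp
        · -- j ≥ 2
          rw [Qf_lt hjn (Nat.zero_le j), Qf_lt (by omega) (by omega),
            (show (j-0)/2 = j/2 by omega)]
          have e1 := pascal_div2 n j (by omega)
          rw [(show (j-2)/2 = (j-1-(0+1))/2 by omega)] at e1
          rcases eq_or_ne j n with hjn' | hjn'
          · rw [Qf, if_neg (by omega), if_pos hjn', Bf_zero_eq]
            rw [hjn'] at e1 ⊢
            exact e1
          · rw [Qf_lt (by omega) (by omega), (show (j-0)/2 = j/2 by omega)]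
            exact e1
      · -- h ≥ 1
        rw [if_pos ⟨by omega, by omega⟩, if_neg hh, add_zero]
        rcases Nat.lt_or_ge j h with hcmp | hcmp
        · rw [Qf_lt' hjn (by omega), Qf_lt' (by omega) (by omega), Qf_lt' (by omega) (by omega)]
        · rcases eq_or_ne h j with rfl | hhj
          · rw [Qf_lt hjn (le_refl _), Qf_lt' (by omega) (by omega),
              Qf_lt (by omega) (by omega)]
            rw [(show (h-h)/2 = 0 by omega), (show (h-1-(h-1))/2 = 0 by omega)]
            simp
          · rcases eq_or_ne h (j-1) with hhj1 | hhj1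
            · rw [Qf_lt hjn hcmp, Qf_lt' (by omega) (by omega),
                Qf_lt (by omega) (by omega)]
              rw [(show (j-h)/2 = 0 by omega), (show (j-1-(h-1))/2 = 0 by omega)]
              simp
            · -- h ≤ j - 2
              rw [Qf_lt hjn hcmp, Qf_lt (by omega) (by omega), Qf_lt (by omega) (by omega)]
              have e1 := pascal_div2 n (j-h) (by omega)
              rw [(show (j-h-2)/2 = (j-1-(h+1))/2 by omega),
                  (show (j-h)/2 = (j-1-(h-1))/2 by omega)] at e1
              rw [(show (j-h)/2 = (j-1-(h-1))/2 by omega)]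
              exact e1
    · -- j = n+1
      subst hjn
      simp only [Nat.add_sub_cancel]
      rw [Qf_diag, Qf_diag, Qf_diag, Qf_gt (by omega), Bf_rec]
      rcases eq_or_ne h 0 with rfl | hh
      · simp
      · rw [if_pos (⟨by omega, by omega⟩ : (1:ℕ) ≤ n+1 ∧ 1 ≤ h), if_neg hh, if_neg hh]
        simp
    · -- j > n+1
      rw [Qf_gt (by omega), Qf_gt (by omega : n < j - 1), Qf_gt (by omega : n < j - 1),
        Qf_gt (by omega : n < j)]
      simp

lemma Qf_eval (n k : ℕ) (hk : 2*k ≤ n) : Qf n (2*k) 0 = Nat.choose n k := by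
  rcases eq_or_ne (2*k) n with he | hne
  · rw [← he] at *
    rw [Qf_diag, Bf_zero_eq, (show 2*k/2 = k by omega)]
  · rw [Qf_lt (by omega) (Nat.zero_le _), (show (2*k-0)/2 = k by omega)]

/-! Combinatorial part: words over Fin 3 (0 = up, 1 = down, 2 = flat). -/

def stepH (h : ℕ) (s : Fin 3) : ℕ := if s = 0 then h + 1 else if s = 1 then h - 1 else h

/-- Heights along a word, starting at `h`. -/
def hgtFrom {n : ℕ} (w : Fin n → Fin 3) (h : ℕ) : ℕ → ℕ
  | 0 => h
  | i+1 => if hi : i < n then stepH (hgtFrom w h i) (w ⟨i, hi⟩) else 0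

/-- Validity: down-steps need positive height, flats need height 0. -/
def ValidF : (n : ℕ) → ℕ → (Fin n → Fin 3) → Prop
  | 0, _, _ => True
  | n+1, h, w =>
      (w 0 = 0 ∨ (w 0 = 1 ∧ 1 ≤ h) ∨ (w 0 = 2 ∧ h = 0)) ∧
        ValidF n (stepH h (w 0)) (Fin.tail w)

/-- Number of non-flat steps. -/
def nfc {n : ℕ} (w : Fin n → Fin 3) : ℕ := (Finset.univ.filter (fun i => w i ≠ 2)).card

def WSet (n j h : ℕ) : Set (Fin n → Fin 3) := {w | ValidF n h w ∧ nfc w = j}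

lemma fin3_cases (s : Fin 3) : s = 0 ∨ s = 1 ∨ s = 2 := by
  fin_cases s <;> simp

lemma hgtFrom_succ {n : ℕ} (w : Fin n → Fin 3) (h : ℕ) {i : ℕ} (hi : i < n) :
    hgtFrom w h (i+1) = stepH (hgtFrom w h i) (w ⟨i, hi⟩) := by
  rw [hgtFrom, dif_pos hi]

lemma hgtFrom_tail {n : ℕ} (w : Fin (n+1) → Fin 3) (h : ℕ) (i : ℕ) :
    hgtFrom (Fin.tail w) (stepH h (w 0)) i = hgtFrom w h (i+1) := by
  induction i with
  | zero =>
    rw [hgtFrom, hgtFrom, dif_pos (by omega : 0 < n+1)]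
    rfl
  | succ i ih =>
    by_cases hi : i < n
    · rw [hgtFrom_succ _ _ hi, hgtFrom_succ w h (by omega : i+1 < n+1), ih]
      rfl
    · rw [hgtFrom, dif_neg hi, hgtFrom, dif_neg (by omega : ¬ i + 1 < n + 1)]

lemma validF_iff : ∀ (n h : ℕ) (w : Fin n → Fin 3), ValidF n h w ↔
    ∀ i : Fin n, (w i = 1 → 1 ≤ hgtFrom w h i.val) ∧ (w i = 2 → hgtFrom w h i.val = 0)
  | 0, h, w => by
    constructor
    · intro _ i; exact absurd i.isLt (by omega)
    · intro _; trivial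
  | n+1, h, w => by
    rw [ValidF, validF_iff n (stepH h (w 0)) (Fin.tail w)]
    constructor
    · rintro ⟨hg, hrest⟩ i
      rcases Fin.eq_zero_or_eq_succ i with rfl | ⟨i', rfl⟩
      · refine ⟨fun h1 => ?_, fun h2 => ?_⟩
        · rcases hg with h' | ⟨_, hh⟩ | ⟨h', _⟩ <;> simp_all [hgtFrom]
        · rcases hg with h' | ⟨h', _⟩ | ⟨_, hh⟩ <;> simp_all [hgtFrom]
      · have := hrest i'
        rw [Fin.tail, hgtFrom_tail] at this
        simpa using this
    · intro hall
      constructor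
      · have := hall 0
        rcases fin3_cases (w 0) with h' | h' | h'
        · exact Or.inl h'
        · exact Or.inr (Or.inl ⟨h', this.1 h'⟩)
        · exact Or.inr (Or.inr ⟨h', this.2 h'⟩)
      · intro i
        have := hall i.succ
        rw [Fin.tail, hgtFrom_tail]
        simpa using this

lemma nfc_cons {n : ℕ} (s : Fin 3) (w : Fin n → Fin 3) :
    nfc (Fin.cons s w) = (if s ≠ 2 then 1 else 0) + nfc w := by
  unfold nfc
  rw [Finset.card_filter, Finset.card_filter, Fin.sum_univ_succ]
  simp [Fin.cons_zero, Fin.cons_succ]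

lemma mem_wset_succ {n j h : ℕ} (w : Fin (n+1) → Fin 3) :
    w ∈ WSet (n+1) j h ↔
      ((w 0 = 0 ∨ (w 0 = 1 ∧ 1 ≤ h) ∨ (w 0 = 2 ∧ h = 0)) ∧
        Fin.tail w ∈ WSet n (j - (if w 0 ≠ 2 then 1 else 0)) (stepH h (w 0))
        ∧ (if w 0 ≠ 2 then 1 else 0) ≤ j) := by
  constructor
  · rintro ⟨⟨hg, hv⟩, hc⟩
    have hn := nfc_cons (w 0) (Fin.tail w)
    rw [Fin.cons_self_tail, hc] at hn
    exact ⟨hg, ⟨hv, by omega⟩, by omega⟩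
  · rintro ⟨hg, ⟨hv, hc⟩, hle⟩
    have hn := nfc_cons (w 0) (Fin.tail w)
    rw [Fin.cons_self_tail, hc] at hn
    exact ⟨⟨hg, hv⟩, by omega⟩

lemma wset_succ00 (n : ℕ) : WSet (n+1) 0 0 = Fin.cons 2 '' WSet n 0 0 := by
  ext w
  rw [mem_wset_succ]
  constructor
  · rintro ⟨hg, hv, hle⟩
    have h2 : w 0 = 2 := by
      rcases hg with h' | ⟨h', hh⟩ | ⟨h', _⟩ <;> simp_all
    refine ⟨Fin.tail w, ?_, by rw [← h2, Fin.cons_self_tail]⟩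
    rw [if_neg (by simp [h2])] at hv
    simpa [stepH, h2] using hv
  · rintro ⟨t, ht, rfl⟩
    refine ⟨Or.inr (Or.inr ⟨Fin.cons_zero _ _, rfl⟩), ?_, ?_⟩ <;>
      simp [Fin.cons_zero, Fin.tail_cons, stepH, ht]

lemma wset_succ0h (n h : ℕ) (hh : 1 ≤ h) : WSet (n+1) 0 h = ∅ := by
  ext w
  rw [mem_wset_succ]
  simp only [Set.mem_empty_iff_false, iff_false]
  rintro ⟨hg, hv, hle⟩
  rcases hg with h' | ⟨h', _⟩ | ⟨h', h0⟩ <;> simp_all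

lemma wset_succ_j0 (n j : ℕ) (hj : 1 ≤ j) :
    WSet (n+1) j 0 = Fin.cons 0 '' WSet n (j-1) 1 ∪ Fin.cons 2 '' WSet n j 0 := by
  ext w
  rw [mem_wset_succ, Set.mem_union]
  constructor
  · rintro ⟨hg, hv, hle⟩
    have h02 : w 0 = 0 ∨ w 0 = 2 := by
      rcases hg with h' | ⟨h', hh⟩ | ⟨h', _⟩ <;> simp_all
    rcases h02 with h0 | h0
    · left
      refine ⟨Fin.tail w, ?_, by rw [← h0, Fin.cons_self_tail]⟩
      rw [if_pos (by simp [h0])] at hv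
      simpa [stepH, h0] using hv
    · right
      refine ⟨Fin.tail w, ?_, by rw [← h0, Fin.cons_self_tail]⟩
      rw [if_neg (by simp [h0])] at hv
      simpa [stepH, h0] using hv
  · rintro (⟨t, ht, rfl⟩ | ⟨t, ht, rfl⟩)
    · refine ⟨Or.inl (Fin.cons_zero _ _), ?_, ?_⟩ <;>
        simp_all [Fin.cons_zero, Fin.tail_cons, stepH]
    · refine ⟨Or.inr (Or.inr ⟨Fin.cons_zero _ _, rfl⟩), ?_, ?_⟩ <;>
        simp_all [Fin.cons_zero, Fin.tail_cons, stepH]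

lemma wset_succ_jh (n j h : ℕ) (hj : 1 ≤ j) (hh : 1 ≤ h) :
    WSet (n+1) j h = Fin.cons 0 '' WSet n (j-1) (h+1) ∪ Fin.cons 1 '' WSet n (j-1) (h-1) := by
  ext w
  rw [mem_wset_succ, Set.mem_union]
  constructor
  · rintro ⟨hg, hv, hle⟩
    have h01 : w 0 = 0 ∨ w 0 = 1 := by
      rcases hg with h' | ⟨h', _⟩ | ⟨h', h0⟩ <;> simp_all
    rcases h01 with h0 | h0
    · left
      refine ⟨Fin.tail w, ?_, by rw [← h0, Fin.cons_self_tail]⟩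
      rw [if_pos (by simp [h0])] at hv
      simpa [stepH, h0] using hv
    · right
      refine ⟨Fin.tail w, ?_, by rw [← h0, Fin.cons_self_tail]⟩
      rw [if_pos (by simp [h0])] at hv
      simpa [stepH, h0] using hv
  · rintro (⟨t, ht, rfl⟩ | ⟨t, ht, rfl⟩)
    · refine ⟨Or.inl (Fin.cons_zero _ _), ?_, ?_⟩ <;>
        simp_all [Fin.cons_zero, Fin.tail_cons, stepH]
    · refine ⟨Or.inr (Or.inl ⟨Fin.cons_zero _ _, hh⟩), ?_, ?_⟩ <;>
        simp_all [Fin.cons_zero, Fin.tail_cons, stepH]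

lemma cons_disjoint {n : ℕ} (s t : Fin 3) (hst : s ≠ t) (A B : Set (Fin n → Fin 3)) :
    Disjoint ((Fin.cons (α := fun _ : Fin (n+1) => Fin 3) s) '' A)
      ((Fin.cons (α := fun _ : Fin (n+1) => Fin 3) t) '' B) := by
  rw [Set.disjoint_left]
  rintro x ⟨a, _, rfl⟩ ⟨b, _, hb⟩
  apply hst
  have := congrFun hb 0
  simpa [Fin.cons_zero] using this.symm

lemma wset_ncard : ∀ n j h : ℕ, (WSet n j h).ncard = Qf n j h := by
  intro n
  induction n with
  | zero =>
    intro j h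
    rcases eq_or_ne j 0 with rfl | hj
    · have he : WSet 0 0 h = Set.univ := by
        ext w
        simp [WSet, ValidF, nfc]
      rw [he, Set.ncard_univ, Nat.card_unique, Qf_diag, Bf_zero]
    · have he : WSet 0 j h = ∅ := by
        ext w
        simp [WSet, ValidF, nfc]
        omega
      rw [he, Set.ncard_empty, Qf_gt (by omega)]
  | succ n ih =>
    intro j h
    rw [Qf_rec]
    rcases eq_or_ne j 0 with rfl | hj
    · rcases eq_or_ne h 0 with rfl | hh
      · rw [wset_succ00, Set.ncard_image_of_injective _ (Fin.cons_right_injective _), ih]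
        simp
      · rw [wset_succ0h n h (by omega), Set.ncard_empty]
        simp [hh]
    · rcases eq_or_ne h 0 with rfl | hh
      · rw [wset_succ_j0 n j (by omega),
          Set.ncard_union_eq (cons_disjoint 0 2 (by decide) _ _),
          Set.ncard_image_of_injective _ (Fin.cons_right_injective _),
          Set.ncard_image_of_injective _ (Fin.cons_right_injective _), ih, ih]
        rw [if_pos (by omega : 1 ≤ j), if_neg (by omega : ¬ ((1:ℕ) ≤ j ∧ 1 ≤ 0)), if_pos rfl]
        simp only [Nat.zero_add]
        omega
      · rw [wset_succ_jh n j h (by omega) (by omega),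
          Set.ncard_union_eq (cons_disjoint 0 1 (by decide) _ _),
          Set.ncard_image_of_injective _ (Fin.cons_right_injective _),
          Set.ncard_image_of_injective _ (Fin.cons_right_injective _), ih, ih]
        rw [if_pos (by omega : 1 ≤ j), if_pos (⟨by omega, by omega⟩ : 1 ≤ j ∧ 1 ≤ h),
          if_neg hh]
        omega

/-! Bridge between words and paths. -/

def pathOf {n : ℕ} (w : Fin n → Fin 3) : Fin (n+1) → ℕ × ℕ :=
  fun i => (i.val, hgtFrom w 0 i.val)

lemma nfc_zero (w : Fin 0 → Fin 3) : nfc w = 0 := by simp [nfc]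

lemma hgt_parity : ∀ (n h : ℕ) (w : Fin n → Fin 3), ValidF n h w →
    hgtFrom w h n % 2 = (h + nfc w) % 2
  | 0, h, w, _ => by simp [hgtFrom, nfc_zero]
  | n+1, h, w, ⟨hg, hv⟩ => by
    have ih := hgt_parity n (stepH h (w 0)) (Fin.tail w) hv
    rw [← hgtFrom_tail w h n]
    have hn : nfc w = (if w 0 ≠ 2 then 1 else 0) + nfc (Fin.tail w) := by
      rw [← nfc_cons, Fin.cons_self_tail]
    rcases fin3_cases (w 0) with h0 | h0 | h0
    · have hs : stepH h (w 0) = h + 1 := by simp [stepH, h0]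
      have he : (if w 0 ≠ 2 then 1 else 0) = 1 := by simp [h0]
      rw [hs] at ih
      rw [he] at hn
      rw [hs, hn]
      omega
    · have hh : 1 ≤ h := by
        rcases hg with h' | ⟨_, hh⟩ | ⟨h', _⟩ <;> simp_all
      have hs : stepH h (w 0) = h - 1 := by simp [stepH, h0]
      have he : (if w 0 ≠ 2 then 1 else 0) = 1 := by simp [h0]
      rw [hs] at ih
      rw [he] at hn
      rw [hs, hn]
      omega
    · have hs : stepH h (w 0) = h := by simp [stepH, h0]
      have he : (if w 0 ≠ 2 then 1 else 0) = 0 := by simp [h0]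
      rw [hs] at ih
      rw [he] at hn
      rw [hs, hn]
      omega

lemma valid_step {n h : ℕ} {w : Fin n → Fin 3} (hv : ValidF n h w) (i : Fin n) :
    (hgtFrom w h (i.val+1) = hgtFrom w h i.val + 1 ∨
     hgtFrom w h (i.val+1) + 1 = hgtFrom w h i.val ∨
     (hgtFrom w h (i.val+1) = hgtFrom w h i.val ∧ hgtFrom w h (i.val+1) = 0))
    ∧ (hgtFrom w h (i.val+1) = hgtFrom w h i.val ↔ w i = 2) := by
  have hc := (validF_iff n h w).1 hv i
  rw [hgtFrom_succ w h i.isLt, Fin.eta]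
  rcases fin3_cases (w i) with h0 | h0 | h0
  · have hs : stepH (hgtFrom w h i.val) (w i) = hgtFrom w h i.val + 1 := by simp [stepH, h0]
    rw [hs]
    refine ⟨Or.inl rfl, fun h' => absurd h' (by omega), fun h2 => ?_⟩
    rw [h0] at h2
    exact absurd h2 (by decide)
  · have h1 : 1 ≤ hgtFrom w h i.val := hc.1 h0
    have hs : stepH (hgtFrom w h i.val) (w i) = hgtFrom w h i.val - 1 := by simp [stepH, h0]
    rw [hs]
    refine ⟨Or.inr (Or.inl (by omega)), fun h' => absurd h' (by omega), fun h2 => ?_⟩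
    rw [h0] at h2
    exact absurd h2 (by decide)
  · have h2 : hgtFrom w h i.val = 0 := hc.2 h0
    have hs : stepH (hgtFrom w h i.val) (w i) = hgtFrom w h i.val := by simp [stepH, h0]
    rw [hs]
    exact ⟨Or.inr (Or.inr ⟨rfl, h2⟩), fun _ => h0, fun _ => rfl⟩

lemma flats_card {n m : ℕ} (w : Fin n → Fin 3) (h : nfc w = m) (hm : m ≤ n) :
    {i : Fin n | w i = 2}.ncard = n - m := by
  rw [Set.ncard_eq_toFinset_card', Set.toFinset_setOf]
  have := Finset.card_filter_add_card_filter_not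
    (s := Finset.univ) (p := fun i : Fin n => w i = 2)
  simp only [Finset.card_univ, Fintype.card_fin] at this
  have hn : (Finset.filter (fun i : Fin n => ¬ w i = 2) Finset.univ).card = m := by
    rw [← h]; rfl
  omega

lemma pathOf_mem {n k : ℕ} (hk : 2*k ≤ n) {w : Fin n → Fin 3} (hw : w ∈ WSet n (2*k) 0) :
    IsDispersedPath n k (pathOf w) := by
  obtain ⟨hv, hc⟩ := hw
  refine ⟨rfl, ?_, ?_, ?_⟩
  · intro i
    constructor
    · simp [pathOf]
    · have := (valid_step hv i).1
      simpa [pathOf] using this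
  · have := hgt_parity n 0 w hv
    rw [hc] at this
    refine ⟨hgtFrom w 0 n / 2, ?_⟩
    simp only [pathOf, Fin.val_last]
    omega
  · have hset : {i : Fin n | (pathOf w i.succ).2 = (pathOf w i.castSucc).2}
        = {i : Fin n | w i = 2} := by
      ext i
      simp only [Set.mem_setOf_eq, pathOf, Fin.val_succ, Fin.coe_castSucc]
      exact (valid_step hv i).2
    rw [hset, flats_card w hc hk]

lemma exists_word {n k : ℕ} (hk : 2*k ≤ n) {p : Fin (n+1) → ℕ × ℕ}
    (hp : IsDispersedPath n k p) : ∃ w ∈ WSet n (2*k) 0, pathOf w = p := by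
  obtain ⟨h0, hstep, _, hflats⟩ := hp
  set w : Fin n → Fin 3 := fun i =>
    if (p i.succ).2 = (p i.castSucc).2 + 1 then 0
    else if (p i.succ).2 + 1 = (p i.castSucc).2 then 1 else 2 with hw
  have claimA : ∀ i : Fin (n+1), (p i).1 = i.val := by
    intro i
    induction i using Fin.induction with
    | zero => rw [h0]; rfl
    | succ i ih =>
      have := (hstep i).1
      rw [Fin.coe_castSucc] at ih
      rw [Fin.val_succ, this, ih]
  have claimB : ∀ i : Fin (n+1), (p i).2 = hgtFrom w 0 i.val := by
    intro i
    induction i using Fin.induction with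
    | zero => rw [h0]; rfl
    | succ i ih =>
      have ht := (hstep i).2
      rw [Fin.coe_castSucc] at ih
      rw [Fin.val_succ, hgtFrom_succ w 0 i.isLt, Fin.eta]
      by_cases c1 : (p i.succ).2 = (p i.castSucc).2 + 1
      · have hwi : w i = 0 := by simp only [hw]; rw [if_pos c1]
        rw [hwi, (show stepH (hgtFrom w 0 i.val) 0 = hgtFrom w 0 i.val + 1 by simp [stepH])]
        omega
      · by_cases c2 : (p i.succ).2 + 1 = (p i.castSucc).2
        · have hwi : w i = 1 := by simp only [hw]; rw [if_neg c1, if_pos c2]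
          rw [hwi, (show stepH (hgtFrom w 0 i.val) 1 = hgtFrom w 0 i.val - 1 by simp [stepH])]
          omega
        · rcases ht with h' | h' | ⟨hq, _⟩
          · exact absurd h' c1
          · exact absurd h' c2
          · have hwi : w i = 2 := by simp only [hw]; rw [if_neg c1, if_neg c2]
            rw [hwi, (show stepH (hgtFrom w 0 i.val) 2 = hgtFrom w 0 i.val by simp [stepH])]
            omega
  have hvalid : ValidF n 0 w := by
    rw [validF_iff]
    intro i
    have hB := claimB i.castSucc
    rw [Fin.coe_castSucc] at hB
    constructor
    · intro hwi
      by_cases c1 : (p i.succ).2 = (p i.castSucc).2 + 1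
      · have : w i = 0 := by simp only [hw]; rw [if_pos c1]
        rw [this] at hwi; exact absurd hwi (by decide)
      · by_cases c2 : (p i.succ).2 + 1 = (p i.castSucc).2
        · omega
        · have : w i = 2 := by simp only [hw]; rw [if_neg c1, if_neg c2]
          rw [this] at hwi; exact absurd hwi (by decide)
    · intro hwi
      by_cases c1 : (p i.succ).2 = (p i.castSucc).2 + 1
      · have : w i = 0 := by simp only [hw]; rw [if_pos c1]
        rw [this] at hwi; exact absurd hwi (by decide)
      · by_cases c2 : (p i.succ).2 + 1 = (p i.castSucc).2
        · have : w i = 1 := by simp only [hw]; rw [if_neg c1, if_pos c2]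
          rw [this] at hwi; exact absurd hwi (by decide)
        · rcases (hstep i).2 with h' | h' | ⟨hq, hz⟩
          · exact absurd h' c1
          · exact absurd h' c2
          · omega
  have hset : {i : Fin n | w i = 2} = {i : Fin n | (p i.succ).2 = (p i.castSucc).2} := by
    ext i
    simp only [Set.mem_setOf_eq]
    constructor
    · intro hwi
      by_cases c1 : (p i.succ).2 = (p i.castSucc).2 + 1
      · have : w i = 0 := by simp only [hw]; rw [if_pos c1]
        rw [this] at hwi; exact absurd hwi (by decide)
      · by_cases c2 : (p i.succ).2 + 1 = (p i.castSucc).2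
        · have : w i = 1 := by simp only [hw]; rw [if_neg c1, if_pos c2]
          rw [this] at hwi; exact absurd hwi (by decide)
        · rcases (hstep i).2 with h' | h' | ⟨hq, _⟩
          · exact absurd h' c1
          · exact absurd h' c2
          · exact hq
    · intro heq
      simp only [hw]
      rw [if_neg (by omega), if_neg (by omega)]
  have hnfc : nfc w = 2*k := by
    have h2 : {i : Fin n | w i = 2}.ncard = n - 2*k := by rw [hset]; exact hflats
    rw [Set.ncard_eq_toFinset_card', Set.toFinset_setOf] at h2
    have htot := Finset.card_filter_add_card_filter_not
      (s := Finset.univ) (p := fun i : Fin n => w i = 2)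
    simp only [Finset.card_univ, Fintype.card_fin] at htot
    have hn : nfc w = (Finset.filter (fun i : Fin n => ¬ w i = 2) Finset.univ).card := rfl
    omega
  refine ⟨w, ⟨hvalid, hnfc⟩, ?_⟩
  funext i
  exact Prod.ext (claimA i).symm (claimB i).symm

lemma pathOf_injOn {n j : ℕ} : Set.InjOn (pathOf (n := n)) (WSet n j 0) := by
  rintro w1 ⟨hv1, _⟩ w2 ⟨hv2, _⟩ heq
  have hgteq : ∀ m, m < n + 1 → hgtFrom w1 0 m = hgtFrom w2 0 m := by
    intro m hm
    have := congrFun heq ⟨m, hm⟩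
    simpa [pathOf, Prod.ext_iff] using this
  funext i
  have hc1 := (validF_iff n 0 w1).1 hv1 i
  have hc2 := (validF_iff n 0 w2).1 hv2 i
  have e1 : hgtFrom w1 0 (i.val+1) = hgtFrom w2 0 (i.val+1) := hgteq _ (by omega)
  have e0 : hgtFrom w1 0 i.val = hgtFrom w2 0 i.val := hgteq _ (by omega)
  rw [hgtFrom_succ w1 0 i.isLt, hgtFrom_succ w2 0 i.isLt, Fin.eta, e0] at e1
  rcases fin3_cases (w1 i) with ha | ha | ha <;> rcases fin3_cases (w2 i) with hb | hb | hb <;>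
      rw [ha, hb] <;> rw [ha] at hc1 e1 <;> rw [hb] at hc2 e1 <;>
      simp_all [stepH] <;> omega

/-- For `0 ≤ k ≤ ⌊n/2⌋`, the number of paths in `D_{n,k}` equals
`C(n, k)`. -/
theorem stmt_13 (n k : ℕ) (hk : k ≤ n / 2) :
    {p : Fin (n + 1) → ℕ × ℕ | IsDispersedPath n k p}.ncard = Nat.choose n k := by

  have hk2 : 2*k ≤ n := by omega
  have himg : {p : Fin (n+1) → ℕ × ℕ | IsDispersedPath n k p} = pathOf '' WSet n (2*k) 0 := by
    ext p
    constructor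
    · intro hp
      exact exists_word hk2 hp
    · rintro ⟨w, hw, rfl⟩
      exact pathOf_mem hk2 hw
  rw [himg, Set.ncard_image_of_injOn pathOf_injOn, wset_ncard, Qf_eval n k hk2]
end

section
/- For 0 ≤ r ≤ ⌊n/2⌋, the number of 321-avoiding involutions z in S_n satisfying z(i) > i for all i ∈ [r] equals C(n−r, ⌈n/2⌉). -/
/-!
A 321-avoiding involution `z` consists of arcs `i < z i` that never nest (`z` is increasing on its
excedances), and no fixed point lies under an arc. Scanning positions from left to right, the
excedances open arcs which the deficiencies close in first-in-first-out order, and a non-excedance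
is a deficiency exactly when some arc is open, i.e. when the path with up-steps at the excedances,
where a down-step at height `0` stays at `0`, has positive height there. Hence `z` is determined by
its excedance set `A`, and `A` occurs iff every final segment of positions contains at least as many
non-members as members of `A`. Reading the complement of `A` from right to left turns these sets,
with `[0, r) ⊆ A`, into the up-step sets of lattice paths of length `n - r` that stay weakly above
`0` and end at height at least `r`, which Pascal's rule counts as `C(n - r, ⌈n/2⌉)`.
-/

open Finset Function

namespace Finset

variable {α : Type*}

lemma card_filter_or_eq [DecidableEq α] (s : Finset α) (P : α → Prop) [DecidablePred P] {i : α}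
    (hi : ¬ P i) : #{j ∈ s | P j ∨ j = i} = #{j ∈ s | P j} + if i ∈ s then 1 else 0 := by
  have hdisj : Disjoint {j ∈ s | P j} {j ∈ s | j = i} :=
    disjoint_filter.2 fun j _ hj (hji : j = i) => hi (hji ▸ hj)
  rw [filter_or, card_union_of_disjoint hdisj, filter_eq']
  split_ifs <;> simp

variable [LinearOrder α] {s : Finset α} {k : ℕ} (h : #s = k)

lemma card_filter_lt_orderEmbOfFin (t : Fin k) : #{x ∈ s | x < s.orderEmbOfFin h t} = t := by
  have : {x ∈ s | x < s.orderEmbOfFin h t} = (Iio t).map (s.orderEmbOfFin h).toEmbedding := by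
    ext x
    simp only [mem_filter, mem_map, mem_Iio, RelEmbedding.coe_toEmbedding]
    constructor
    · rintro ⟨hx, hxt⟩
      obtain ⟨u, rfl⟩ : x ∈ Set.range (s.orderEmbOfFin h) := by rwa [range_orderEmbOfFin]
      exact ⟨u, (s.orderEmbOfFin h).lt_iff_lt.1 hxt, rfl⟩
    · rintro ⟨u, hu, rfl⟩
      exact ⟨orderEmbOfFin_mem s h u, (s.orderEmbOfFin h).lt_iff_lt.2 hu⟩
  rw [this, card_map, Fin.card_Iio]

lemma orderEmbOfFin_lt_iff (t : Fin k) (a : α) :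
    s.orderEmbOfFin h t < a ↔ (t : ℕ) < #{x ∈ s | x < a} := by
  constructor
  · intro hlt
    rw [← card_filter_lt_orderEmbOfFin h t]
    refine card_lt_card ⟨fun x hx => ?_, fun hsub => ?_⟩
    · simp only [mem_filter] at hx ⊢
      exact ⟨hx.1, hx.2.trans hlt⟩
    · simpa using hsub (mem_filter.2 ⟨orderEmbOfFin_mem s h t, hlt⟩)
  · intro hlt
    by_contra! hle
    rw [← card_filter_lt_orderEmbOfFin h t] at hlt
    refine hlt.not_ge (card_le_card fun x hx => ?_)
    simp only [mem_filter] at hx ⊢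
    exact ⟨hx.1, hx.2.trans_le hle⟩

lemma orderIsoOfFin_symm_orderEmbOfFin (t : Fin k) :
    (s.orderIsoOfFin h).symm ⟨s.orderEmbOfFin h t, orderEmbOfFin_mem s h t⟩ = t :=
  (s.orderIsoOfFin h).symm_apply_eq.2 (Subtype.ext (coe_orderIsoOfFin_apply s h t).symm)

lemma exists_orderEmbOfFin_eq {x : α} (hx : x ∈ s) : ∃ t, s.orderEmbOfFin h t = x :=
  (Set.ext_iff.1 (range_orderEmbOfFin s h) x).2 hx

variable {A C : Finset α} (hA : #A = k) (hC : #C = k)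

def rankMatching (x : α) : α :=
  if hx : x ∈ A then C.orderEmbOfFin hC ((A.orderIsoOfFin hA).symm ⟨x, hx⟩)
  else if hx : x ∈ C then A.orderEmbOfFin hA ((C.orderIsoOfFin hC).symm ⟨x, hx⟩) else x

lemma rankMatching_left (t : Fin k) :
    rankMatching hA hC (A.orderEmbOfFin hA t) = C.orderEmbOfFin hC t := by
  rw [rankMatching, dif_pos (orderEmbOfFin_mem A hA t), orderIsoOfFin_symm_orderEmbOfFin]

lemma rankMatching_right (hAC : Disjoint A C) (t : Fin k) :
    rankMatching hA hC (C.orderEmbOfFin hC t) = A.orderEmbOfFin hA t := by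
  rw [rankMatching, dif_neg (disjoint_right.1 hAC (orderEmbOfFin_mem C hC t)),
    dif_pos (orderEmbOfFin_mem C hC t), orderIsoOfFin_symm_orderEmbOfFin]

lemma rankMatching_of_notMem {x : α} (hxA : x ∉ A) (hxC : x ∉ C) : rankMatching hA hC x = x := by
  rw [rankMatching, dif_neg hxA, dif_neg hxC]

lemma rankMatching_involutive (hAC : Disjoint A C) : Involutive (rankMatching hA hC) := by
  intro x
  by_cases hxA : x ∈ A
  · obtain ⟨t, rfl⟩ := exists_orderEmbOfFin_eq hA hxA
    rw [rankMatching_left, rankMatching_right hA hC hAC]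
  by_cases hxC : x ∈ C
  · obtain ⟨t, rfl⟩ := exists_orderEmbOfFin_eq hC hxC
    rw [rankMatching_right hA hC hAC, rankMatching_left]
  rw [rankMatching_of_notMem hA hC hxA hxC, rankMatching_of_notMem hA hC hxA hxC]

end Finset

namespace Equiv.Perm

lemma mul_self_eq_one_iff_involutive {α : Type*} {z : Perm α} : z * z = 1 ↔ Involutive z :=
  Perm.ext_iff

variable {α : Type*} [LinearOrder α] {z : Perm α}

def Avoids321 (z : Perm α) : Prop :=
  ¬∃ i j k, i < j ∧ j < k ∧ z k < z j ∧ z j < z i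

lemma Avoids321.strictMonoOn (hz : Involutive z) (h : z.Avoids321) :
    StrictMonoOn z {i | i < z i} := by
  intro i hi j hj hij
  by_contra! hle
  refine h ⟨i, j, z j, hij, hj, ?_, hle.lt_of_ne fun he => hij.ne (z.injective he.symm)⟩
  rw [hz j]
  exact hj

lemma Avoids321.apply_ne_self (hz : Involutive z) (h : z.Avoids321) {a c : α} (hac : a < c)
    (hca : c < z a) : z c ≠ c := fun hc =>
  h ⟨a, c, z a, hac, hca, by rwa [hz, hc], by rwa [hc]⟩

lemma avoids321_of_strictMonoOn (hE : StrictMonoOn z {i | i < z i})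
    (hD : StrictMonoOn z {i | z i < i}) (hfix : ∀ a c, a < c → c < z a → z c ≠ c) :
    z.Avoids321 := by
  rintro ⟨i, j, k, hij, hjk, hkj, hji⟩
  rcases lt_trichotomy j (z j) with hj | hj | hj
  · exact (hE (hij.trans (hj.trans hji)) hj hij).not_gt hji
  · exact hfix i j hij (hj ▸ hji) hj.symm
  · exact (hD hj (hkj.trans (hj.trans hjk)) hjk).not_gt hkj

lemma exists_lt_apply_eq_iff (hz : Involutive z) {j : α} : (∃ i, i < z i ∧ z i = j) ↔ z j < j :=
  ⟨by rintro ⟨i, hi, rfl⟩; rwa [hz], fun hj => ⟨z j, by rwa [hz], hz j⟩⟩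

lemma Avoids321.eq_of_forall_lt_iff [Finite α] {z₁ z₂ : Perm α} (hz₁ : Involutive z₁)
    (hz₂ : Involutive z₂) (h₁ : z₁.Avoids321) (h₂ : z₂.Avoids321)
    (hE : ∀ i, i < z₁ i ↔ i < z₂ i) (hD : ∀ i, z₁ i < i ↔ z₂ i < i) : z₁ = z₂ := by
  let f (w : Perm α) (i : {i // i < z₁ i}) : α := w i
  have hmono₁ : StrictMono (f z₁) := fun i j hij => h₁.strictMonoOn hz₁ i.2 j.2 hij
  have hmono₂ : StrictMono (f z₂) := fun i j hij =>
    h₂.strictMonoOn hz₂ ((hE i).1 i.2) ((hE j).1 j.2) hij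
  have hrange : Set.range (f z₁) = Set.range (f z₂) := by
    ext j
    simp only [Set.mem_range, Subtype.exists, f, exists_prop]
    rw [exists_lt_apply_eq_iff hz₁]
    simp only [hE]
    rw [exists_lt_apply_eq_iff hz₂, hD]
  have hexc : ∀ i, i < z₁ i → z₁ i = z₂ i := fun i hi =>
    congrFun ((hmono₁.range_inj hmono₂).1 hrange) ⟨i, hi⟩
  ext i
  rcases lt_trichotomy i (z₁ i) with hi | hi | hi
  · rw [hexc i hi]
  · have hlt : ¬ i < z₂ i := by rw [← hE, ← hi]; exact lt_irrefl i
    have hgt : ¬ z₂ i < i := by rw [← hD, ← hi]; exact lt_irrefl i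
    rw [← hi]
    exact le_antisymm (not_lt.1 hgt) (not_lt.1 hlt)
  · have hdef := hexc (z₁ i) (by rwa [hz₁])
    rw [hz₁] at hdef
    rw [← hz₂ (z₁ i), ← hdef]

section Fintype

variable [Fintype α]

def excedances (z : Perm α) : Finset α := {i | i < z i}

def deficiencies (z : Perm α) : Finset α := {i | z i < i}

@[simp] lemma mem_excedances {i : α} : i ∈ z.excedances ↔ i < z i := by simp [excedances]

@[simp] lemma mem_deficiencies {i : α} : i ∈ z.deficiencies ↔ z i < i := by simp [deficiencies]

lemma card_filter_excedances_le (hz : Involutive z) (P : α → Prop) [DecidablePred P]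
    (hP : ∀ i j, i ≤ j → P i → P j) :
    #{i ∈ z.excedances | P i} ≤ #{i ∈ z.deficiencies | P i} := by
  refine card_le_card_of_injOn z (fun i hi => ?_) z.injective.injOn
  simp only [mem_coe, mem_filter, mem_excedances, mem_deficiencies] at hi ⊢
  exact ⟨by rw [hz]; exact hi.1, hP _ _ hi.1.le hi.2⟩

lemma Avoids321.apply_lt_iff (hz : Involutive z) (h : z.Avoids321) (i : α) :
    z i < i ↔ ¬ i < z i ∧ #{j ∈ z.deficiencies | j < i} < #{j ∈ z.excedances | j < i} := by
  constructor
  · intro hi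
    have hnot : i ∉ {j ∈ z.deficiencies | j < i} := by simp
    have hle := card_le_card_of_injOn (s := insert i {j ∈ z.deficiencies | j < i})
      (t := {j ∈ z.excedances | j < i}) z (fun j hj => ?_) z.injective.injOn
    · rw [card_insert_of_notMem hnot] at hle
      exact ⟨hi.asymm, hle⟩
    simp only [mem_coe, mem_insert, mem_filter, mem_excedances, mem_deficiencies] at hj ⊢
    rcases hj with rfl | ⟨hj, hji⟩
    · exact ⟨by rwa [hz], hi⟩
    · exact ⟨by rwa [hz], hj.trans hji⟩
  · rintro ⟨hi, hcard⟩
    by_contra hfix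
    have hzi : z i = i := le_antisymm (not_lt.1 hi) (not_lt.1 hfix)
    refine hcard.not_ge (card_le_card_of_injOn z (fun j hj => ?_) z.injective.injOn)
    simp only [mem_coe, mem_filter, mem_excedances, mem_deficiencies] at hj ⊢
    refine ⟨by rw [hz]; exact hj.1, lt_of_le_of_ne ?_ ?_⟩
    · exact not_lt.1 fun hlt => h.apply_ne_self hz hj.2 hlt hzi
    · exact fun he => hj.2.ne (z.injective (he.trans hzi.symm))


theorem exists_involutive_avoids321_excedances_eq {A C : Finset α} {k : ℕ}
    (hA : #A = k) (hC : #C = k) (hAC : _root_.Disjoint A C)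
    (hlt : ∀ t, A.orderEmbOfFin hA t < C.orderEmbOfFin hC t)
    (hcover : ∀ t x, A.orderEmbOfFin hA t < x → x < C.orderEmbOfFin hC t → x ∈ A ∨ x ∈ C) :
    ∃ z : Perm α, Involutive z ∧ z.Avoids321 ∧ z.excedances = A := by
  let z := (rankMatching_involutive hA hC hAC).toPerm
  have hleft (t : Fin k) : z (A.orderEmbOfFin hA t) = C.orderEmbOfFin hC t :=
    rankMatching_left hA hC t
  have hright (t : Fin k) : z (C.orderEmbOfFin hC t) = A.orderEmbOfFin hA t :=
    rankMatching_right hA hC hAC t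
  have hexc (x : α) : x < z x ↔ x ∈ A := by
    by_cases hxA : x ∈ A
    · obtain ⟨t, rfl⟩ := exists_orderEmbOfFin_eq hA hxA
      simp only [hleft, hlt, hxA]
    by_cases hxC : x ∈ C
    · obtain ⟨t, rfl⟩ := exists_orderEmbOfFin_eq hC hxC
      simp only [hright, hxA, iff_false, not_lt, (hlt t).le]
    simp only [show z x = x from rankMatching_of_notMem hA hC hxA hxC, lt_irrefl, hxA]
  have hdef (x : α) : z x < x ↔ x ∈ C := by
    by_cases hxC : x ∈ C
    · obtain ⟨t, rfl⟩ := exists_orderEmbOfFin_eq hC hxC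
      simp only [hright, hlt, hxC]
    by_cases hxA : x ∈ A
    · obtain ⟨t, rfl⟩ := exists_orderEmbOfFin_eq hA hxA
      simp only [hleft, hxC, iff_false, not_lt, (hlt t).le]
    simp only [show z x = x from rankMatching_of_notMem hA hC hxA hxC, lt_irrefl, hxC]
  refine ⟨z, rankMatching_involutive hA hC hAC, avoids321_of_strictMonoOn ?_ ?_ ?_, ?_⟩
  · intro i hi j hj hij
    obtain ⟨s, rfl⟩ := exists_orderEmbOfFin_eq hA ((hexc i).1 hi)
    obtain ⟨t, rfl⟩ := exists_orderEmbOfFin_eq hA ((hexc j).1 hj)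
    rw [hleft, hleft]
    exact (C.orderEmbOfFin hC).strictMono ((A.orderEmbOfFin hA).lt_iff_lt.1 hij)
  · intro i hi j hj hij
    obtain ⟨s, rfl⟩ := exists_orderEmbOfFin_eq hC ((hdef i).1 hi)
    obtain ⟨t, rfl⟩ := exists_orderEmbOfFin_eq hC ((hdef j).1 hj)
    rw [hright, hright]
    exact (A.orderEmbOfFin hA).strictMono ((C.orderEmbOfFin hC).lt_iff_lt.1 hij)
  · intro a c hac hca hfix
    obtain ⟨t, rfl⟩ := exists_orderEmbOfFin_eq hA ((hexc a).1 (hac.trans hca))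
    rw [hleft] at hca
    rcases hcover t c hac hca with hc | hc
    · exact ((hexc c).2 hc).ne' hfix
    · exact ((hdef c).2 hc).ne hfix
  · ext x
    rw [mem_excedances, hexc]

end Fintype

end Equiv.Perm

namespace Involution321

open Equiv.Perm

variable {n : ℕ}

-- Truncated subtraction: a non-member of `A` at height `0` leaves the height at `0`.
def height (A : Finset (Fin n)) : ℕ → ℕ
  | 0 => 0
  | p + 1 => if p ∈ A.map Fin.valEmbedding then height A p + 1 else height A p - 1

def closers (A : Finset (Fin n)) : Finset (Fin n) := {i | i ∉ A ∧ 0 < height A i}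

def IsBallot (A : Finset (Fin n)) : Prop :=
  ∀ s : ℕ, #{i ∈ A | s ≤ i.val} ≤ #{i ∈ Aᶜ | s ≤ i.val}

variable {A : Finset (Fin n)}

@[simp] lemma mem_closers {i : Fin n} : i ∈ closers A ↔ i ∉ A ∧ 0 < height A i := by
  simp [closers]

lemma height_succ {p : ℕ} (hp : p < n) :
    height A (p + 1) = if ⟨p, hp⟩ ∈ A then height A p + 1 else height A p - 1 := by
  have hmem : p ∈ A.map Fin.valEmbedding ↔ ⟨p, hp⟩ ∈ A := by
    show Fin.valEmbedding ⟨p, hp⟩ ∈ _ ↔ _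
    exact mem_map' _
  simp only [height, hmem]

lemma card_filter_val_lt_add_one (s : Finset (Fin n)) {p : ℕ} (hp : p < n) :
    #{j ∈ s | j.val < p + 1} = #{j ∈ s | j.val < p} + if ⟨p, hp⟩ ∈ s then 1 else 0 := by
  rw [← card_filter_or_eq s _ (lt_irrefl p)]
  congr 1
  exact filter_congr fun j _ => by simp only [Fin.ext_iff]; omega

lemma card_filter_le_val (s : Finset (Fin n)) {p : ℕ} (hp : p < n) :
    #{j ∈ s | p ≤ j.val} = #{j ∈ s | p + 1 ≤ j.val} + if ⟨p, hp⟩ ∈ s then 1 else 0 := by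
  rw [← card_filter_or_eq s _ (by simp : ¬ p + 1 ≤ p)]
  congr 1
  exact filter_congr fun j _ => by simp only [Fin.ext_iff]; omega

lemma height_add_card_closers (A : Finset (Fin n)) {p : ℕ} (hp : p ≤ n) :
    height A p + #{i ∈ closers A | i.val < p} = #{i ∈ A | i.val < p} := by
  induction p with
  | zero => simp [height]
  | succ p ih =>
    have hp' : p < n := hp
    have hC := card_filter_val_lt_add_one (closers A) hp'
    have hA := card_filter_val_lt_add_one A hp'
    have hh := height_succ (A := A) hp'
    have := ih hp'.le
    have hmem : (⟨p, hp'⟩ : Fin n) ∈ closers A ↔ ⟨p, hp'⟩ ∉ A ∧ 0 < height A p := mem_closers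
    simp only [hmem] at hC
    split_ifs at hC hA hh <;> grind

lemma height_add_card_closers_lt (A : Finset (Fin n)) (i : Fin n) :
    height A i + #{j ∈ closers A | j < i} = #{j ∈ A | j < i} := by
  simpa only [Fin.val_fin_lt] using height_add_card_closers A i.2.le

lemma height_add_card_le (hA : IsBallot A) {p : ℕ} (hp : p ≤ n) :
    height A p + #{i ∈ A | p ≤ i.val} ≤ #{i ∈ Aᶜ | p ≤ i.val} := by
  induction p with
  | zero => simpa [height] using hA 0
  | succ p ih =>
    have hp' : p < n := hp
    have hA' := card_filter_le_val A hp'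
    have hAc := card_filter_le_val Aᶜ hp'
    have hh := height_succ (A := A) hp'
    have := ih hp'.le
    have := hA (p + 1)
    simp only [mem_compl] at hAc
    split_ifs at hA' hAc hh <;> omega

lemma card_closers (hA : IsBallot A) : #(closers A) = #A := by
  have hzero := height_add_card_le hA le_rfl
  rw [filter_false_of_mem fun i _ => not_le.2 i.2, filter_false_of_mem fun i _ => not_le.2 i.2,
    card_empty] at hzero
  have := height_add_card_closers A le_rfl
  rw [filter_true_of_mem fun i _ => i.2, filter_true_of_mem fun i _ => i.2] at this
  omega

theorem IsBallot.exists_involutive_avoids321_excedances_eq (hA : IsBallot A) :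
    ∃ z : Equiv.Perm (Fin n), Involutive z ∧ z.Avoids321 ∧ z.excedances = A := by
  refine Equiv.Perm.exists_involutive_avoids321_excedances_eq rfl (card_closers hA)
    (disjoint_right.2 fun i hi => (mem_closers.1 hi).1) (fun t => ?_) (fun t x hlt hgt => ?_)
  · set c := (closers A).orderEmbOfFin (card_closers hA) t
    have hc : c ∉ A ∧ 0 < height A c := mem_closers.1 (orderEmbOfFin_mem _ _ t)
    have hcount := height_add_card_closers_lt A c
    rw [card_filter_lt_orderEmbOfFin] at hcount
    rw [orderEmbOfFin_lt_iff]
    omega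
  · by_contra! hx
    have hzero : height A x = 0 := by
      by_contra h
      exact hx.2 (mem_closers.2 ⟨hx.1, Nat.pos_of_ne_zero h⟩)
    have hcount := height_add_card_closers_lt A x
    rw [orderEmbOfFin_lt_iff] at hlt
    exact hgt.not_gt ((orderEmbOfFin_lt_iff _ _ _).2 (by omega))

lemma deficiencies_eq_closers {z : Equiv.Perm (Fin n)} (hz : Involutive z) (h : z.Avoids321) :
    z.deficiencies = closers z.excedances := by
  ext i
  induction i using WellFoundedLT.induction with
  | _ i ih =>
    have hbelow : {j ∈ z.deficiencies | j < i} = {j ∈ closers z.excedances | j < i} := by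
      ext j
      simp only [mem_filter]
      exact ⟨fun hj => ⟨(ih j hj.2).1 hj.1, hj.2⟩, fun hj => ⟨(ih j hj.2).2 hj.1, hj.2⟩⟩
    have hcount := height_add_card_closers_lt z.excedances i
    rw [mem_deficiencies, h.apply_lt_iff hz, hbelow, mem_closers, mem_excedances]
    exact and_congr_right fun _ => by omega

lemma eq_of_excedances_eq {z₁ z₂ : Equiv.Perm (Fin n)} (hz₁ : Involutive z₁) (hz₂ : Involutive z₂)
    (h₁ : z₁.Avoids321) (h₂ : z₂.Avoids321) (hE : z₁.excedances = z₂.excedances) : z₁ = z₂ := by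
  refine h₁.eq_of_forall_lt_iff hz₁ hz₂ h₂ (fun i => ?_) (fun i => ?_)
  · rw [← mem_excedances, hE, mem_excedances]
  · rw [← mem_deficiencies, deficiencies_eq_closers hz₁ h₁, hE, ← deficiencies_eq_closers hz₂ h₂,
      mem_deficiencies]

lemma isBallot_excedances {z : Equiv.Perm (Fin n)} (hz : Involutive z) : IsBallot z.excedances :=
  fun _ => (card_filter_excedances_le hz _ fun _ _ hij hi => hi.trans hij).trans
    (card_le_card (filter_subset_filter _ fun _ hi =>
      mem_compl.2 fun hi' => (mem_excedances.1 hi').asymm (mem_deficiencies.1 hi)))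

-- `S` is the set of up-steps of a path of length `m` that stays weakly above `0` and ends at
-- height at least `r`.
def ballotSets (m r : ℕ) : Finset (Finset ℕ) :=
  (range m).powerset.filter fun S =>
    (∀ t < m, t ≤ 2 * #{j ∈ S | j < t}) ∧ m + r ≤ 2 * #S

lemma mem_ballotSets {m r : ℕ} {S : Finset ℕ} :
    S ∈ ballotSets m r ↔
      S ⊆ range m ∧ (∀ t < m, t ≤ 2 * #{j ∈ S | j < t}) ∧ m + r ≤ 2 * #S := by
  rw [ballotSets, mem_filter, mem_powerset]

lemma ballotSets_zero (r : ℕ) : ballotSets 0 r = if r = 0 then {∅} else ∅ := by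
  ext S
  split_ifs with hr <;> simp [mem_ballotSets, hr]
  rintro rfl
  simpa [Nat.pos_iff_ne_zero]

lemma ballotSets_succ (m r : ℕ) :
    ballotSets (m + 1) r = ballotSets m (r + 1) ∪ (ballotSets m (r - 1)).image (insert m) := by
  have hlt : ∀ S ⊆ range m, #{j ∈ S | j < m} = #S := fun S hS =>
    congrArg card (filter_true_of_mem fun j hj => mem_range.1 (hS hj))
  have hins (S : Finset ℕ) : ∀ t ≤ m, #{j ∈ insert m S | j < t} = #{j ∈ S | j < t} :=
    fun t ht => by rw [filter_insert, if_neg (by omega)]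
  rw [ballotSets, range_add_one, powerset_insert, filter_union, filter_image]
  congr 1
  · ext S
    simp only [mem_filter, mem_powerset, mem_ballotSets]
    refine and_congr_right fun hS => ?_
    rw [Nat.forall_lt_succ_right, hlt S hS]
    constructor
    · rintro ⟨⟨hpre, -⟩, htot⟩
      exact ⟨hpre, by omega⟩
    · rintro ⟨hpre, htot⟩
      exact ⟨⟨hpre, by omega⟩, by omega⟩
  · congr 1
    ext S
    simp only [mem_filter, mem_powerset, mem_ballotSets]
    refine and_congr_right fun hS => ?_
    have hpre : (∀ t < m, t ≤ 2 * #{j ∈ insert m S | j < t}) ↔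
        ∀ t < m, t ≤ 2 * #{j ∈ S | j < t} :=
      forall₂_congr fun t ht => by rw [hins S t ht.le]
    rw [Nat.forall_lt_succ_right, hpre, hins S m le_rfl, hlt S hS,
      card_insert_of_notMem fun h => by simpa using hS h]
    constructor
    · rintro ⟨⟨hpre, hm⟩, htot⟩
      exact ⟨hpre, by omega⟩
    · rintro ⟨hpre, htot⟩
      exact ⟨⟨hpre, by omega⟩, by omega⟩

theorem card_ballotSets (m r : ℕ) : #(ballotSets m r) = m.choose ((m + r + 1) / 2) := by
  induction m generalizing r with
  | zero =>
    rw [ballotSets_zero]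
    split_ifs with hr
    · simp [hr]
    · rw [card_empty, Nat.choose_eq_zero_of_lt (by omega)]
  | succ m ih =>
    have hdisj : Disjoint (ballotSets m (r + 1)) ((ballotSets m (r - 1)).image (insert m)) := by
      refine disjoint_left.2 fun S hS hS' => ?_
      obtain ⟨T, -, rfl⟩ := mem_image.1 hS'
      simpa using (mem_ballotSets.1 hS).1 (mem_insert_self m T)
    have hinj : Set.InjOn (insert m) (ballotSets m (r - 1) : Set (Finset ℕ)) := by
      intro S hS T hT h
      have hmS : m ∉ S := fun h => by simpa using (mem_ballotSets.1 hS).1 h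
      have hmT : m ∉ T := fun h => by simpa using (mem_ballotSets.1 hT).1 h
      rw [← erase_insert hmS, ← erase_insert hmT, h]
    rw [ballotSets_succ, card_union_of_disjoint hdisj, card_image_of_injOn hinj, ih, ih]
    rw [show (m + 1 + r + 1) / 2 = (m + r) / 2 + 1 by omega, Nat.choose_succ_succ', add_comm]
    rcases Nat.eq_zero_or_pos r with rfl | hr
    · rw [Nat.choose_symm_of_eq_add (show m = (m + 1) / 2 + m / 2 by omega)]
      congr 2
      omega
    · congr 2 <;> omega

lemma mem_ballotSets_iff_forall_le {m r : ℕ} {S : Finset ℕ} :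
    S ∈ ballotSets m r ↔ S ⊆ range m ∧ ∀ t ≤ m + r, t ≤ 2 * #{j ∈ S | j < t} := by
  rw [mem_ballotSets]
  refine and_congr_right fun hS => ?_
  have hall : ∀ t, m ≤ t → #{j ∈ S | j < t} = #S := fun t ht =>
    congrArg card (filter_true_of_mem fun j hj => (mem_range.1 (hS hj)).trans_le ht)
  constructor
  · rintro ⟨hpre, htot⟩ t ht
    rcases lt_or_ge t m with htm | htm
    · exact hpre t htm
    · rw [hall t htm]
      omega
  · intro h
    refine ⟨fun t ht => h t (by omega), ?_⟩
    have := h (m + r) le_rfl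
    rwa [hall _ (Nat.le_add_right m r)] at this

def pathOf (A : Finset (Fin n)) : Finset ℕ := Aᶜ.image fun i => (i.rev : ℕ)

lemma pathOf_injective : Injective (pathOf (n := n)) :=
  (image_injective (Fin.val_injective.comp Fin.rev_injective)).comp compl_injective

lemma exists_pathOf_eq {S : Finset ℕ} (hS : S ⊆ range n) : ∃ A : Finset (Fin n), pathOf A = S := by
  refine ⟨({i | (i.rev : ℕ) ∉ S} : Finset (Fin n)), ?_⟩
  ext j
  simp only [pathOf, mem_image, mem_compl, mem_filter, mem_univ, true_and, not_not]
  constructor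
  · rintro ⟨i, hi, rfl⟩
    exact hi
  · intro hj
    exact ⟨(⟨j, mem_range.1 (hS hj)⟩ : Fin n).rev, by simpa using hj, by simp⟩

lemma card_filter_add_card_filter_compl (A : Finset (Fin n)) (s : ℕ) :
    #{i ∈ A | s ≤ i.val} + #{i ∈ Aᶜ | s ≤ i.val} = n - s := by
  rw [← card_union_of_disjoint (disjoint_filter_filter disjoint_compl_right), ← filter_union,
    union_compl]
  have hsplit := card_filter_add_card_filter_not (s := (univ : Finset (Fin n))) (· < s)
  rw [Fin.card_filter_val_lt, card_univ, Fintype.card_fin] at hsplit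
  simp only [not_lt] at hsplit
  omega

lemma forall_le_two_mul_card_pathOf_iff :
    (∀ t ≤ n, t ≤ 2 * #{j ∈ pathOf A | j < t}) ↔ IsBallot A := by
  have hcount (t : ℕ) (ht : t ≤ n) :
      t ≤ 2 * #{j ∈ pathOf A | j < t} ↔
        #{i ∈ A | n - t ≤ i.val} ≤ #{i ∈ Aᶜ | n - t ≤ i.val} := by
    have hsum := card_filter_add_card_filter_compl A (n - t)
    rw [pathOf, filter_image,
      card_image_of_injective _ fun _ _ h => Fin.rev_injective (Fin.val_injective h)]
    have : {i ∈ Aᶜ | (i.rev : ℕ) < t} = {i ∈ Aᶜ | n - t ≤ i.val} :=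
      filter_congr fun i _ => by rw [Fin.val_rev]; omega
    rw [this]
    omega
  constructor
  · intro h s
    rcases le_or_gt n s with hs | hs
    · rw [filter_false_of_mem fun i _ => not_le.2 (i.2.trans_le hs), card_empty]
      exact Nat.zero_le _
    · have := (hcount (n - s) (by omega)).1 (h _ (by omega))
      rwa [Nat.sub_sub_self hs.le] at this
  · exact fun hA t ht => (hcount t ht).2 (hA _)

lemma pathOf_mem_ballotSets_iff {r : ℕ} (hr : r ≤ n) :
    pathOf A ∈ ballotSets (n - r) r ↔ (∀ i : Fin n, i.val < r → i ∈ A) ∧ IsBallot A := by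
  rw [mem_ballotSets_iff_forall_le, Nat.sub_add_cancel hr, forall_le_two_mul_card_pathOf_iff]
  refine and_congr_left fun _ => ?_
  simp only [pathOf, image_subset_iff, mem_compl, mem_range, Fin.val_rev]
  refine forall_congr' fun i => ⟨fun h hi => ?_, fun h hi => ?_⟩
  · by_contra hiA
    have := h hiA
    omega
  · by_contra hle
    exact hi (h (by omega))

end Involution321

open Equiv.Perm Involution321

/-- For `0 ≤ r ≤ ⌊n/2⌋`, the number of 321-avoiding involutions `z` in
`S_n` satisfying `z(i) > i` for all `i ∈ [r]` (here `S_n` acts on `Fin n`, so the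
condition reads `z(i) > i` for the first `r` points) equals `C(n - r, ⌈n/2⌉)`. -/
theorem stmt_14 (n r : ℕ) (hr : r ≤ n / 2) :
    {z : Equiv.Perm (Fin n) | z * z = 1 ∧
      (¬∃ i j k : Fin n, i < j ∧ j < k ∧ z k < z j ∧ z j < z i) ∧
      (∀ i : Fin n, (i : ℕ) < r → i < z i)}.ncard
    = Nat.choose (n - r) ((n + 1) / 2) := by
  have hrn : r ≤ n := hr.trans (Nat.div_le_self n 2)
  have hcard := card_ballotSets (n - r) r
  rw [Nat.sub_add_cancel hrn] at hcard
  rw [← hcard, ← Set.ncard_coe_finset]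
  refine Set.ncard_congr (fun z _ => pathOf z.excedances) ?_ ?_ ?_
  · rintro z ⟨hz, -, hlow⟩
    exact (pathOf_mem_ballotSets_iff hrn).2 ⟨fun i hi => mem_excedances.2 (hlow i hi),
      isBallot_excedances (mul_self_eq_one_iff_involutive.1 hz)⟩
  · rintro z₁ z₂ ⟨hz₁, h₁, -⟩ ⟨hz₂, h₂, -⟩ h
    exact eq_of_excedances_eq (mul_self_eq_one_iff_involutive.1 hz₁)
      (mul_self_eq_one_iff_involutive.1 hz₂) h₁ h₂ (pathOf_injective h)
  · intro S hS
    obtain ⟨A, rfl⟩ := exists_pathOf_eq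
      ((mem_ballotSets.1 hS).1.trans (range_subset_range.2 (Nat.sub_le n r)))
    obtain ⟨hlow, hA⟩ := (pathOf_mem_ballotSets_iff hrn).1 hS
    obtain ⟨z, hz, h321, rfl⟩ := hA.exists_involutive_avoids321_excedances_eq
    exact ⟨z, ⟨mul_self_eq_one_iff_involutive.2 hz, h321, fun i hi => mem_excedances.1 (hlow i hi)⟩,
      rfl⟩
end
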